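/- arXiv:2405.10773 — 5 statements merged into one kernel-verified Lean document; each statement's English description precedes it below -/
import Mathlib

section
/- Under consistency (Y(a)=Y when A=a for a∈{0,1}), randomization ((Y(1),Y(0),U) ⟂ A | (X,S=1)), CATE transportability (E[Y(1)−Y(0)|X,U,S=0] = E[Y(1)−Y(0)|X,U,S=1] a.s.-P(X,U|S=0)), and positivity (P(S=1|X,U)·e(a|X) > 0 where e(a|X)=P(A=a|X,S=1)), the target parameter ψ = E[Y(1)−Y(0)|S=0] satisfies ψ = E[ E[ (2A−1)Y/e(A|X) | X,U,S=1 ] | S=0 ] = (1/α)·E[ S·(P(S=0|X,U)/P(S=1|X,U))·(2A−1)Y/e(A|X) ], where α = P(S=0). -/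
/-! In the trial, randomization gives `E[1{A=1} | X, Y(1), Y(0), U] = E[1{A=1} | X] = e(1|X)`;
since `(2A-1)Y/e(A|X) = 1{A=1} Y(1)/e(1|X) - 1{A=0} Y(0)/e(0|X)` by consistency, conditioning
on `(X, Y(1), Y(0), U)` turns `Ỹ` into `Y(1) - Y(0)`, and the tower property gives
`E[Ỹ | X, U, S=1] = E[Y(1) - Y(0) | X, U, S=1]`. Transportability identifies this with the
target CATE, and positivity makes every `(X, U)`-measurable set that is null in the trial null
in the target population, which gives the first formula. For the second, Bayes' rule
`E[1{S=1} Z | X, U] = P(S=1 | X, U) E[Z | X, U, S=1]` shows that the odds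
`P(S=0 | X, U) / P(S=1 | X, U)` reweight the trial into the target population. -/

open MeasureTheory ProbabilityTheory Set

noncomputable section

/-- Conditional independence of `f` and `g` given `σ(c)` under `μ`, expressed through
factorization of conditional expectations of bounded measurable test functions. -/
def CondIndepFunAE {Ω β γ δ : Type*} [MeasurableSpace Ω] [MeasurableSpace β]
    [MeasurableSpace γ] [MeasurableSpace δ]
    (c : Ω → δ) (f : Ω → β) (g : Ω → γ) (μ : Measure Ω) : Prop :=
  ∀ (φ : β → ℝ) (ψ : γ → ℝ), Measurable φ → Measurable ψ →
    (∀ b, |φ b| ≤ 1) → (∀ c', |ψ c'| ≤ 1) →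
    condExp (MeasurableSpace.comap c inferInstance) μ (fun ω => φ (f ω) * ψ (g ω)) =ᵐ[μ]
      fun ω => (condExp (MeasurableSpace.comap c inferInstance) μ (fun ω' => φ (f ω')) ω) *
        (condExp (MeasurableSpace.comap c inferInstance) μ (fun ω' => ψ (g ω')) ω)

open scoped ENNReal

lemma abs_indicator_one_le_one {α : Type*} (B : Set α) (x : α) :
    |B.indicator (1 : α → ℝ) x| ≤ 1 := by
  simpa using norm_indicator_le_norm_self (s := B) (1 : α → ℝ) x

section CondMeasure

variable {Ω : Type*} [MeasurableSpace Ω] {μ : Measure Ω} {s : Set Ω}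

lemma setIntegral_eq_toReal_mul_integral_cond (hs : μ s ≠ ∞) (f : Ω → ℝ) :
    ∫ x in s, f x ∂μ = (μ s).toReal * ∫ x, f x ∂μ[|s] := by
  by_cases h0 : μ s = 0
  · simp [Measure.restrict_eq_zero.mpr h0, h0]
  rw [ProbabilityTheory.cond, integral_smul_measure, ENNReal.toReal_inv, smul_eq_mul,
    ← mul_assoc, mul_inv_cancel₀ (ENNReal.toReal_ne_zero.mpr ⟨h0, hs⟩), one_mul]

lemma MeasureTheory.Integrable.integrableOn_of_cond (hs : μ s ≠ ∞) {f : Ω → ℝ}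
    (hf : Integrable f μ[|s]) : IntegrableOn f s μ := by
  by_cases h0 : μ s = 0
  · simp [IntegrableOn, Measure.restrict_eq_zero.mpr h0]
  have : μ.restrict s = μ s • μ[|s] := by
    rw [ProbabilityTheory.cond, smul_smul, ENNReal.mul_inv_cancel h0 hs, one_smul]
  rw [IntegrableOn, this]
  exact hf.smul_measure hs

lemma MeasureTheory.Integrable.cond {f : Ω → ℝ} (hf : Integrable f μ) (s : Set Ω) :
    Integrable f μ[|s] := by
  by_cases h0 : μ s = 0
  · simp [cond_eq_zero_of_meas_eq_zero h0]
  exact hf.restrict.smul_measure (ENNReal.inv_ne_top.mpr h0)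

lemma measure_inter_eq_zero_of_cond_eq_zero (hs : MeasurableSet s) (hs' : μ s ≠ ∞) {t : Set Ω}
    (h : μ[t|s] = 0) : μ (s ∩ t) = 0 := by
  rw [cond_apply hs] at h
  exact (mul_eq_zero.mp h).resolve_left (ENNReal.inv_ne_zero.mpr hs')

end CondMeasure

section CondExp

variable {Ω : Type*} {m m0 : MeasurableSpace Ω} {μ : Measure Ω}

lemma integral_mul_condExp_of_stronglyMeasurable (hm : m ≤ m0) [SigmaFinite (μ.trim hm)]
    {b Z : Ω → ℝ} (hb : StronglyMeasurable[m] b) (hbZ : Integrable (b * Z) μ)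
    (hZ : Integrable Z μ) : ∫ x, b x * (μ[Z|m]) x ∂μ = ∫ x, b x * Z x ∂μ :=
  calc ∫ x, b x * (μ[Z|m]) x ∂μ = ∫ x, μ[b * Z|m] x ∂μ :=
        integral_congr_ae (condExp_mul_of_stronglyMeasurable_left hb hbZ hZ).symm
    _ = ∫ x, b x * Z x ∂μ := integral_condExp hm

lemma setIntegral_eq_integral_mul_condExp_indicator (hm : m ≤ m0) [IsFiniteMeasure μ]
    {s : Set Ω} (hs : MeasurableSet[m0] s) {Z : Ω → ℝ} (hZ : StronglyMeasurable[m] Z)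
    (hZs : IntegrableOn Z s μ) : ∫ x in s, Z x ∂μ = ∫ x, Z x * (μ⟦s|m⟧) x ∂μ := by
  have hZ1 : (Z * s.indicator fun _ => (1 : ℝ)) = s.indicator Z := by
    ext x; by_cases hx : x ∈ s <;> simp [hx]
  rw [integral_mul_condExp_of_stronglyMeasurable hm hZ (hZ1 ▸ hZs.integrable_indicator hs)
    ((integrable_const 1).indicator hs), ← integral_indicator hs]
  exact congrArg (integral μ) hZ1.symm

lemma setIntegral_mul_eq_integral_mul_condExp_cond (hm : m ≤ m0) [IsFiniteMeasure μ]
    {s : Set Ω} (hs : MeasurableSet[m0] s) {g Z : Ω → ℝ} (hg : StronglyMeasurable[m] g)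
    (hgZ : Integrable (g * Z) μ[|s]) (hZ : Integrable Z μ[|s]) :
    ∫ x in s, g x * Z x ∂μ = ∫ x, g x * (μ[|s][Z|m]) x * (μ⟦s|m⟧) x ∂μ := by
  have hgG : Integrable (g * μ[|s][Z|m]) μ[|s] :=
    integrable_condExp.congr (condExp_mul_of_stronglyMeasurable_left hg hgZ hZ)
  calc ∫ x in s, g x * Z x ∂μ = (μ s).toReal * ∫ x, g x * Z x ∂μ[|s] :=
        setIntegral_eq_toReal_mul_integral_cond (measure_ne_top μ s) _
    _ = (μ s).toReal * ∫ x, g x * (μ[|s][Z|m]) x ∂μ[|s] := by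
        rw [integral_mul_condExp_of_stronglyMeasurable hm hg hgZ hZ]
    _ = ∫ x in s, g x * (μ[|s][Z|m]) x ∂μ :=
        (setIntegral_eq_toReal_mul_integral_cond (measure_ne_top μ s) _).symm
    _ = ∫ x, g x * (μ[|s][Z|m]) x * (μ⟦s|m⟧) x ∂μ :=
        setIntegral_eq_integral_mul_condExp_indicator hm hs
          (hg.mul stronglyMeasurable_condExp) (hgG.integrableOn_of_cond (measure_ne_top μ s))

lemma integral_mul_mul_condExp_of_condExp_mul [IsFiniteMeasure μ] (hm : m ≤ m0)
    {ξ F G : Ω → ℝ}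
    (hξ : StronglyMeasurable[m] ξ) (hF : Measurable F) (hG : Measurable G)
    (hξb : ∀ ω, |ξ ω| ≤ 1) (hFb : ∀ ω, |F ω| ≤ 1) (hGb : ∀ ω, |G ω| ≤ 1)
    (hFG : μ[F * G|m] =ᵐ[μ] μ[F|m] * μ[G|m]) :
    ∫ ω, ξ ω * F ω * G ω ∂μ = ∫ ω, ξ ω * F ω * (μ[G|m]) ω ∂μ := by
  have hξm : Measurable ξ := (hξ.mono hm).measurable
  have hEG : ∀ᵐ ω ∂μ, |(μ[G|m]) ω| ≤ 1 := ae_bdd_abs_condExp_of_ae_bdd_abs (ae_of_all _ hGb)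
  have hFi : Integrable F μ := Integrable.of_bound hF.aestronglyMeasurable 1 (ae_of_all _ hFb)
  have hFGi : Integrable (F * G) μ :=
    Integrable.of_bound (hF.mul hG).aestronglyMeasurable 1 (ae_of_all _ fun ω => by
      simpa [abs_mul] using mul_le_one₀ (hFb ω) (abs_nonneg _) (hGb ω))
  have hξFGi : Integrable (ξ * (F * G)) μ :=
    Integrable.of_bound (hξm.mul (hF.mul hG)).aestronglyMeasurable 1 (ae_of_all _ fun ω => by
      simp only [Pi.mul_apply, Real.norm_eq_abs, abs_mul]
      exact mul_le_one₀ (hξb ω) (by positivity) (mul_le_one₀ (hFb ω) (abs_nonneg _) (hGb ω)))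
  have hξEGFi : Integrable ((ξ * μ[G|m]) * F) μ :=
    Integrable.of_bound
      ((hξm.mul (stronglyMeasurable_condExp.mono hm).measurable).mul hF).aestronglyMeasurable 1
      (by filter_upwards [hEG] with ω hω
          simpa [abs_mul] using mul_le_one₀ (mul_le_one₀ (hξb ω) (abs_nonneg _) hω)
            (abs_nonneg _) (hFb ω))
  calc ∫ ω, ξ ω * F ω * G ω ∂μ = ∫ ω, ξ ω * (F * G) ω ∂μ := by
        simp only [Pi.mul_apply, mul_assoc]
    _ = ∫ ω, ξ ω * (μ[F * G|m]) ω ∂μ :=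
        (integral_mul_condExp_of_stronglyMeasurable hm hξ hξFGi hFGi).symm
    _ = ∫ ω, (ξ * μ[G|m]) ω * (μ[F|m]) ω ∂μ := by
        refine integral_congr_ae ?_
        filter_upwards [hFG] with ω hω
        simp only [Pi.mul_apply, hω]
        ring
    _ = ∫ ω, (ξ * μ[G|m]) ω * F ω ∂μ :=
        integral_mul_condExp_of_stronglyMeasurable hm (hξ.mul stronglyMeasurable_condExp)
          hξEGFi hFi
    _ = ∫ ω, ξ ω * F ω * (μ[G|m]) ω ∂μ :=
        integral_congr_ae (ae_of_all _ fun ω => by simp only [Pi.mul_apply]; ring)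

end CondExp

section Positivity

variable {Ω : Type*} {m m0 : MeasurableSpace Ω} {μ : Measure Ω} [IsFiniteMeasure μ]
  {s t : Set Ω}

lemma ae_condExp_indicator_eq_zero_of_measure_inter_eq_zero
    (hs : MeasurableSet[m0] s) {D : Set Ω} (hD : MeasurableSet[m] D) (h : μ (s ∩ D) = 0) :
    ∀ᵐ x ∂μ, x ∈ D → (μ⟦s|m⟧) x = 0 := by
  have hnull : D.indicator (s.indicator fun _ => (1 : ℝ)) =ᵐ[μ] 0 := by
    rw [indicator_indicator, inter_comm]
    exact indicator_meas_zero h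
  filter_upwards [condExp_indicator ((integrable_const (1 : ℝ)).indicator hs) hD,
    condExp_congr_ae (m := m) hnull] with x hx hx0 hxD
  rw [hx0, condExp_zero, indicator_of_mem hxD] at hx
  exact hx.symm

lemma cond_eq_zero_of_cond_eq_zero (hs : MeasurableSet[m0] s)
    (hpos : ∀ᵐ x ∂μ[|t], 0 < (μ⟦s|m⟧) x) {D : Set Ω} (hD : MeasurableSet[m] D)
    (h : μ[D|s] = 0) : μ[D|t] = 0 := by
  have hQ := ae_condExp_indicator_eq_zero_of_measure_inter_eq_zero hs hD
    (measure_inter_eq_zero_of_cond_eq_zero hs (measure_ne_top μ s) h)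
  refine measure_eq_zero_iff_ae_notMem.mpr ?_
  filter_upwards [hpos, cond_absolutelyContinuous.ae_le hQ] with x hx hxQ hxD
  exact hx.ne' (hxQ hxD)

lemma ae_eq_cond_of_ae_eq_cond (hs : MeasurableSet[m0] s)
    (hpos : ∀ᵐ x ∂μ[|t], 0 < (μ⟦s|m⟧) x) {f g : Ω → ℝ} (hf : StronglyMeasurable[m] f)
    (hg : StronglyMeasurable[m] g) (hfg : f =ᵐ[μ[|s]] g) : f =ᵐ[μ[|t]] g :=
  cond_eq_zero_of_cond_eq_zero hs hpos (hf.measurableSet_eq_fun hg).compl hfg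

lemma ae_condExp_indicator_eq_zero_of_pos (ht : MeasurableSet[m0] t)
    (hpos : ∀ᵐ x ∂μ[|t], 0 < (μ⟦s|m⟧) x) :
    ∀ᵐ x ∂μ, (μ⟦s|m⟧) x = 0 → (μ⟦t|m⟧) x = 0 := by
  have hD : MeasurableSet[m] {x | (μ⟦s|m⟧) x = 0} :=
    stronglyMeasurable_condExp.measurable (measurableSet_singleton 0)
  refine ae_condExp_indicator_eq_zero_of_measure_inter_eq_zero ht hD
    (measure_inter_eq_zero_of_cond_eq_zero ht (measure_ne_top μ t) ?_)
  refine measure_eq_zero_iff_ae_notMem.mpr ?_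
  filter_upwards [hpos] with x hx hx0
  exact hx.ne' hx0

end Positivity

section PiSystem

variable {Ω : Type*} {m m0 : MeasurableSpace Ω} {μ : Measure Ω}

lemma setIntegral_eq_setIntegral_of_isPiSystem (hm : m ≤ m0) {C : Set (Set Ω)}
    (h_eq : m = MeasurableSpace.generateFrom C) (h_inter : IsPiSystem C) {f g : Ω → ℝ}
    (hf : Integrable f μ) (hg : Integrable g μ)
    (basic : ∀ t ∈ C, ∫ x in t, f x ∂μ = ∫ x in t, g x ∂μ)
    (h_univ : ∫ x, f x ∂μ = ∫ x, g x ∂μ) :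
    ∀ t, MeasurableSet[m] t → ∫ x in t, f x ∂μ = ∫ x in t, g x ∂μ := by
  refine MeasurableSpace.induction_on_inter h_eq h_inter (by simp) basic ?_ ?_
  · intro t ht h
    have hf' := integral_add_compl (hm t ht) hf
    have hg' := integral_add_compl (hm t ht) hg
    linarith
  · intro F hdisj hF h
    rw [integral_iUnion (fun i => hm _ (hF i)) hdisj hf.integrableOn,
      integral_iUnion (fun i => hm _ (hF i)) hdisj hg.integrableOn]
    exact tsum_congr h

end PiSystem

section CondIndepFunAE

variable {Ω β γ δ : Type*} [MeasurableSpace Ω] [MeasurableSpace β] [MeasurableSpace γ]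
  [MeasurableSpace δ] {μ : Measure Ω} [IsFiniteMeasure μ] {c : Ω → δ} {f : Ω → β} {g : Ω → γ}

lemma CondIndepFunAE.condExp_comap_prodMk_eq (h : CondIndepFunAE c f g μ) (hc : Measurable c)
    (hf : Measurable f) (hg : Measurable g) {ψ : γ → ℝ} (hψ : Measurable ψ)
    (hψb : ∀ b, |ψ b| ≤ 1) :
    μ[fun ω => ψ (g ω) | MeasurableSpace.comap (fun ω => (c ω, f ω)) inferInstance] =ᵐ[μ]
      μ[fun ω => ψ (g ω) | MeasurableSpace.comap c inferInstance] := by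
  have hcf : Measurable fun ω => (c ω, f ω) := hc.prodMk hf
  have hc_le : MeasurableSpace.comap c inferInstance ≤
      MeasurableSpace.comap (fun ω => (c ω, f ω)) inferInstance := by
    rw [show c = Prod.fst ∘ fun ω => (c ω, f ω) from rfl, ← MeasurableSpace.comap_comp]
    exact MeasurableSpace.comap_mono measurable_fst.comap_le
  have hGm : Measurable fun ω => ψ (g ω) := hψ.comp hg
  have hG : Integrable (fun ω => ψ (g ω)) μ :=
    Integrable.of_bound hGm.aestronglyMeasurable 1 (ae_of_all _ fun ω => hψb (g ω))
  refine (ae_eq_condExp_of_forall_setIntegral_eq hcf.comap_le hG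
    (fun s _ _ => integrable_condExp.integrableOn) (fun s hs _ => ?_)
    (stronglyMeasurable_condExp.mono hc_le).aestronglyMeasurable).symm
  refine setIntegral_eq_setIntegral_of_isPiSystem hcf.comap_le
    (by rw [← generateFrom_prod, MeasurableSpace.comap_generateFrom]; rfl)
    (isPiSystem_prod.comap _) integrable_condExp hG ?_ (integral_condExp hc.comap_le) s hs
  rintro _ ⟨_, ⟨B₁, hB₁, B₂, hB₂, rfl⟩, rfl⟩
  have hrect : ∀ F : Ω → ℝ, ∫ ω in (fun ω => (c ω, f ω)) ⁻¹' B₁ ×ˢ B₂, F ω ∂μ =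
      ∫ ω, B₁.indicator 1 (c ω) * B₂.indicator 1 (f ω) * F ω ∂μ := fun F => by
    rw [← integral_indicator (hcf (hB₁.prod hB₂))]
    refine integral_congr_ae (ae_of_all _ fun ω => ?_)
    by_cases h₁ : c ω ∈ B₁ <;> by_cases h₂ : f ω ∈ B₂ <;> simp [h₁, h₂]
  rw [hrect, hrect]
  refine (integral_mul_mul_condExp_of_condExp_mul hc.comap_le
    ((measurable_one.indicator hB₁).comp (comap_measurable c)).stronglyMeasurable
    ((measurable_one.indicator hB₂).comp hf) hGm (fun ω => abs_indicator_one_le_one _ _)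
    (fun ω => abs_indicator_one_le_one _ _)
    (fun ω => hψb _) ?_).symm
  exact h _ ψ (measurable_one.indicator hB₂) hψ (abs_indicator_one_le_one _) hψb

end CondIndepFunAE

section InverseProbabilityWeighting

variable {Ω : Type*} {m m0 : MeasurableSpace Ω} {μ : Measure Ω}

lemma condExp_mul_eq_of_mul_ae_eq {Z a b e : Ω → ℝ}
    (hb : StronglyMeasurable[m] b) (hZa : Integrable (Z * a) μ) (ha : Integrable a μ)
    (hab : Z * a =ᵐ[μ] b * a) (hae : μ[a|m] =ᵐ[μ] e) : μ[Z * a|m] =ᵐ[μ] b * e :=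
  (condExp_congr_ae hab).trans
    ((condExp_mul_of_stronglyMeasurable_left hb (hZa.congr hab) ha).trans
      ((Filter.EventuallyEq.refl _ b).mul hae))

lemma condExp_eq_sub_of_inverseProbabilityWeighted [IsFiniteMeasure μ] (hm : m ≤ m0)
    {a e y₁ y₀ Z : Ω → ℝ} (ha : Measurable a) (ha01 : ∀ᵐ ω ∂μ, a ω = 0 ∨ a ω = 1) (he : StronglyMeasurable[m] e)
    (he01 : ∀ ω, 0 < e ω ∧ e ω < 1) (hy₁ : StronglyMeasurable[m] y₁)
    (hy₀ : StronglyMeasurable[m] y₀) (hae : μ[a|m] =ᵐ[μ] e)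
    (hZ : ∀ᵐ ω ∂μ, Z ω = a ω * y₁ ω / e ω - (1 - a ω) * y₀ ω / (1 - e ω))
    (hZi : Integrable Z μ) : μ[Z|m] =ᵐ[μ] y₁ - y₀ := by
  have ha_bdd : ∀ᵐ ω ∂μ, ‖a ω‖ ≤ 1 := by
    filter_upwards [ha01] with ω h; rcases h with h | h <;> simp [h]
  have hai : Integrable a μ := Integrable.of_bound ha.aestronglyMeasurable 1 ha_bdd
  have hZa : Integrable (Z * a) μ := hZi.mul_bdd ha.aestronglyMeasurable ha_bdd
  have hZa' : Integrable (Z * (1 - a)) μ := by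
    have : Z * (1 - a) = Z - Z * a := by ring
    rw [this]; exact hZi.sub hZa
  have h₁ : μ[Z * a|m] =ᵐ[μ] (y₁ / e) * e := by
    refine condExp_mul_eq_of_mul_ae_eq (hy₁.div he) hZa hai ?_ hae
    filter_upwards [ha01, hZ] with ω h hZω
    rcases h with h | h <;> simp [h, hZω]
  have h₀ : μ[Z * (1 - a)|m] =ᵐ[μ] (-(y₀ / (1 - e))) * (1 - e) := by
    refine condExp_mul_eq_of_mul_ae_eq
      ((hy₀.div (stronglyMeasurable_const.sub he)).neg) hZa' ((integrable_const 1).sub hai) ?_ ?_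
    · filter_upwards [ha01, hZ] with ω h hZω
      rcases h with h | h <;> simp [h, hZω]
    · have h1 : μ[(1 : Ω → ℝ)|m] = 1 := condExp_const hm 1
      filter_upwards [condExp_sub (f := 1) (integrable_const 1) hai m, hae] with ω h h'
      rw [h, h1, Pi.sub_apply, h']
      rfl
  have hsplit : Z = Z * a + Z * (1 - a) := by ring
  rw [hsplit]
  filter_upwards [condExp_add hZa hZa' m, h₁, h₀] with ω h h₁ h₀
  have he0 := (he01 ω).1.ne'
  have he1 := (sub_pos.mpr (he01 ω).2).ne'
  rw [h, Pi.add_apply, h₁, h₀]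
  simp only [Pi.mul_apply, Pi.div_apply, Pi.neg_apply, Pi.sub_apply, Pi.one_apply]
  field_simp
  ring

end InverseProbabilityWeighting

section InverseOdds

variable {Ω : Type*} {m m0 : MeasurableSpace Ω} {μ : Measure Ω} [IsFiniteMeasure μ]
  {s t : Set Ω}

lemma setIntegral_odds_mul_eq_toReal_mul_integral_condExp (hm : m ≤ m0)
    (hs : MeasurableSet[m0] s) (ht : MeasurableSet[m0] t) (hpos : ∀ᵐ x ∂μ[|t], 0 < (μ⟦s|m⟧) x)
    {Z : Ω → ℝ} (hZ : Integrable Z μ[|s])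
    (hoddsZ : Integrable (fun x => (μ⟦t|m⟧) x / (μ⟦s|m⟧) x * Z x) μ[|s])
    (hG : Integrable (μ[|s][Z|m]) μ[|t]) :
    ∫ x in s, (μ⟦t|m⟧) x / (μ⟦s|m⟧) x * Z x ∂μ = (μ t).toReal * ∫ x, (μ[|s][Z|m]) x ∂μ[|t] := by
  have hodds : StronglyMeasurable[m] (μ⟦t|m⟧ / μ⟦s|m⟧) :=
    stronglyMeasurable_condExp.div stronglyMeasurable_condExp
  calc ∫ x in s, (μ⟦t|m⟧) x / (μ⟦s|m⟧) x * Z x ∂μ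
      = ∫ x, (μ⟦t|m⟧) x / (μ⟦s|m⟧) x * (μ[|s][Z|m]) x * (μ⟦s|m⟧) x ∂μ :=
        setIntegral_mul_eq_integral_mul_condExp_cond hm hs hodds hoddsZ hZ
    _ = ∫ x, (μ[|s][Z|m]) x * (μ⟦t|m⟧) x ∂μ := by
        refine integral_congr_ae ?_
        filter_upwards [ae_condExp_indicator_eq_zero_of_pos ht hpos] with x hx
        by_cases h0 : (μ⟦s|m⟧) x = 0
        · simp [h0, hx h0]
        · field_simp
    _ = ∫ x in t, (μ[|s][Z|m]) x ∂μ :=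
        (setIntegral_eq_integral_mul_condExp_indicator hm ht stronglyMeasurable_condExp
          (hG.integrableOn_of_cond (measure_ne_top μ t))).symm
    _ = (μ t).toReal * ∫ x, (μ[|s][Z|m]) x ∂μ[|t] :=
        setIntegral_eq_toReal_mul_integral_cond (measure_ne_top μ t) _

end InverseOdds

lemma condExp_transformedOutcome_eq {Ω 𝓧 𝓤 : Type*} [MeasurableSpace Ω] [MeasurableSpace 𝓧]
    [MeasurableSpace 𝓤] {ν : Measure Ω} [IsFiniteMeasure ν] {X : Ω → 𝓧} {U : Ω → 𝓤}
    (hX : Measurable X) (hU : Measurable U) {A Y Y0 Y1 : Ω → ℝ} (hA : Measurable A)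
    (hY0 : Measurable Y0) (hY1 : Measurable Y1) (hAbin : ∀ ω, A ω = 0 ∨ A ω = 1)
    {e1 : 𝓧 → ℝ} (he1 : Measurable e1) (hepos : ∀ x, 0 < e1 x ∧ e1 x < 1)
    (heA : (fun ω => e1 (X ω)) =ᵐ[ν]
      ν[{ω | A ω = 1}.indicator (fun _ => (1 : ℝ)) | MeasurableSpace.comap X inferInstance])
    (hcons : ∀ᵐ ω ∂ν, (A ω = 1 → Y ω = Y1 ω) ∧ (A ω = 0 → Y ω = Y0 ω))
    (hrand : CondIndepFunAE X (fun ω => (Y1 ω, Y0 ω, U ω)) A ν) {Ytil : Ω → ℝ}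
    (hYtil : ∀ ω, Ytil ω =
      (2 * A ω - 1) * Y ω / (if A ω = 1 then e1 (X ω) else 1 - e1 (X ω)))
    (hi : Integrable Ytil ν) :
    ν[Ytil | MeasurableSpace.comap (fun ω => (X ω, U ω)) inferInstance] =ᵐ[ν]
      ν[fun ω => Y1 ω - Y0 ω | MeasurableSpace.comap (fun ω => (X ω, U ω)) inferInstance] := by
  have hXV : Measurable fun ω => (X ω, (Y1 ω, Y0 ω, U ω)) :=
    hX.prodMk (hY1.prodMk (hY0.prodMk hU))
  have hXV' := comap_measurable (m := inferInstanceAs (MeasurableSpace (𝓧 × ℝ × ℝ × 𝓤)))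
    fun ω => (X ω, (Y1 ω, Y0 ω, U ω))
  have hXU_le : MeasurableSpace.comap (fun ω => (X ω, U ω)) inferInstance ≤
      MeasurableSpace.comap (fun ω => (X ω, (Y1 ω, Y0 ω, U ω))) inferInstance := by
    rw [show (fun ω => (X ω, U ω)) = (fun p : 𝓧 × ℝ × ℝ × 𝓤 => (p.1, p.2.2.2)) ∘
      (fun ω => (X ω, (Y1 ω, Y0 ω, U ω))) from rfl, ← MeasurableSpace.comap_comp]
    exact MeasurableSpace.comap_mono (measurable_fst.prodMk measurable_snd.snd.snd).comap_le
  have hae := (hrand.condExp_comap_prodMk_eq hX (hY1.prodMk (hY0.prodMk hU)) hA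
    (measurable_one.indicator (measurableSet_singleton 1)) (abs_indicator_one_le_one _)).trans
      heA.symm
  refine (condExp_condExp_of_le hXU_le hXV.comap_le).symm.trans (condExp_congr_ae
    (condExp_eq_sub_of_inverseProbabilityWeighted hXV.comap_le
      (a := {ω | A ω = 1}.indicator fun _ => 1)
      (measurable_const.indicator (hA (measurableSet_singleton 1)))
      (ae_of_all _ fun ω => by rcases hAbin ω with h | h <;> simp [h])
      (he1.comp (measurable_fst.comp hXV')).stronglyMeasurable (fun ω => hepos (X ω))
      (measurable_fst.comp (measurable_snd.comp hXV')).stronglyMeasurable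
      (measurable_fst.comp (measurable_snd.snd.comp hXV')).stronglyMeasurable hae ?_ hi))
  filter_upwards [hcons] with ω hω
  rcases hAbin ω with h | h <;> norm_num [hYtil, h, hω, neg_div]

theorem stmt1_general {Ω 𝓧 𝓤 : Type*} [MeasurableSpace Ω] [MeasurableSpace 𝓧] [MeasurableSpace 𝓤]
    (μ : Measure Ω) [IsProbabilityMeasure μ]
    (X : Ω → 𝓧) (U : Ω → 𝓤) (hX : Measurable X) (hU : Measurable U)
    (S A Y Y0 Y1 : Ω → ℝ) (hS : Measurable S) (hA : Measurable A)
    (hY0 : Measurable Y0) (hY1 : Measurable Y1)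
    (hAbin : ∀ ω, A ω = 0 ∨ A ω = 1)
    (α : ℝ) (hα : α = (μ {ω | S ω = 0}).toReal) (hαpos : 0 < α)
    -- the known propensity score `e(1|X) = P(A=1 | X, S=1)`, strictly between 0 and 1
    (e1 : 𝓧 → ℝ) (he1 : Measurable e1) (hepos : ∀ x, 0 < e1 x ∧ e1 x < 1)
    (heA : (fun ω => e1 (X ω)) =ᵐ[μ[|{ω | S ω = 1}]]
      condExp (MeasurableSpace.comap X inferInstance) (μ[|{ω | S ω = 1}])
        (Set.indicator {ω | A ω = 1} (fun _ => (1 : ℝ))))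
    -- Assumption 1(i): consistency
    (hcons : ∀ ω, S ω = 1 → ((A ω = 1 → Y ω = Y1 ω) ∧ (A ω = 0 → Y ω = Y0 ω)))
    -- Assumption 1(ii): randomization `(Y(1), Y(0), U) ⟂ A | (X, S=1)`
    (hrand : CondIndepFunAE X (fun ω => (Y1 ω, Y0 ω, U ω)) A (μ[|{ω | S ω = 1}]))
    -- Assumption 1(iii): CATE transportability given `(X, U)`
    (htrans : condExp (MeasurableSpace.comap (fun ω => (X ω, U ω)) inferInstance)
          (μ[|{ω | S ω = 0}]) (fun ω => Y1 ω - Y0 ω)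
        =ᵐ[μ[|{ω | S ω = 0}]]
        condExp (MeasurableSpace.comap (fun ω => (X ω, U ω)) inferInstance)
          (μ[|{ω | S ω = 1}]) (fun ω => Y1 ω - Y0 ω))
    -- versions of the conditional trial-participation probabilities `P(S=s | X, U)`
    (p0 p1 : Ω → ℝ)
    (hp0 : p0 =ᵐ[μ] condExp (MeasurableSpace.comap (fun ω => (X ω, U ω)) inferInstance) μ
      (Set.indicator {ω | S ω = 0} (fun _ => (1 : ℝ))))
    (hp1 : p1 =ᵐ[μ] condExp (MeasurableSpace.comap (fun ω => (X ω, U ω)) inferInstance) μ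
      (Set.indicator {ω | S ω = 1} (fun _ => (1 : ℝ))))
    -- Assumption 1(iv): positivity
    (hpos : ∀ᵐ ω ∂(μ[|{ω | S ω = 0}]), 0 < p1 ω)
    -- the transformed outcome `Ỹ = (2A−1)Y / e(A|X)`
    (Ytil : Ω → ℝ)
    (hYtil : ∀ ω, Ytil ω =
      (2 * A ω - 1) * Y ω / (if A ω = 1 then e1 (X ω) else 1 - e1 (X ω)))
    -- target parameter
    (ψ : ℝ) (hψ : ψ = ∫ ω, (Y1 ω - Y0 ω) ∂(μ[|{ω | S ω = 0}]))
    -- integrability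
    (hi2 : Integrable Ytil (μ[|{ω | S ω = 1}]))
    (hi3 : Integrable (fun ω => condExp (MeasurableSpace.comap (fun ω' => (X ω', U ω'))
      inferInstance) (μ[|{ω | S ω = 1}]) Ytil ω) (μ[|{ω | S ω = 0}]))
    (hi4 : Integrable (fun ω => (p0 ω / p1 ω) * Ytil ω) μ) :
    ψ = ∫ ω, condExp (MeasurableSpace.comap (fun ω' => (X ω', U ω')) inferInstance)
          (μ[|{ω | S ω = 1}]) Ytil ω ∂(μ[|{ω | S ω = 0}]) ∧
      ψ = (1 / α) * ∫ ω in {ω | S ω = 1}, (p0 ω / p1 ω) * Ytil ω ∂μ := by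
  have hm := (hX.prodMk hU).comap_le
  have hs0 : MeasurableSet {ω | S ω = 0} := hS (measurableSet_singleton 0)
  have hs1 : MeasurableSet {ω | S ω = 1} := hS (measurableSet_singleton 1)
  have hG := condExp_transformedOutcome_eq hX hU hA hY0 hY1 hAbin he1 hepos heA
    (by filter_upwards [ae_cond_mem hs1] with ω hω using hcons ω hω) hrand hYtil hi2
  have hpos' : ∀ᵐ ω ∂μ[|{ω | S ω = 0}],
      0 < (μ⟦{ω | S ω = 1}|MeasurableSpace.comap (fun ω => (X ω, U ω)) inferInstance⟧) ω := by
    filter_upwards [hpos, cond_absolutelyContinuous.ae_le hp1] with ω hω hp using hp ▸ hω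
  have hψ' : ψ = ∫ ω, (μ[|{ω | S ω = 1}][Ytil|MeasurableSpace.comap (fun ω => (X ω, U ω))
      inferInstance]) ω ∂μ[|{ω | S ω = 0}] := by
    rw [hψ, ← integral_condExp hm, integral_congr_ae htrans]
    exact integral_congr_ae (ae_eq_cond_of_ae_eq_cond hs1 hpos' stronglyMeasurable_condExp
      stronglyMeasurable_condExp hG.symm)
  refine ⟨hψ', ?_⟩
  have hodds : (fun ω => p0 ω / p1 ω * Ytil ω) =ᵐ[μ] fun ω =>
      (μ⟦{ω | S ω = 0}|MeasurableSpace.comap (fun ω => (X ω, U ω)) inferInstance⟧) ω /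
        (μ⟦{ω | S ω = 1}|MeasurableSpace.comap (fun ω => (X ω, U ω)) inferInstance⟧) ω *
          Ytil ω := by
    filter_upwards [hp0, hp1] with ω h0 h1 using by rw [h0, h1]
  rw [setIntegral_congr_ae hs1 (hodds.mono fun ω h _ => h),
    setIntegral_odds_mul_eq_toReal_mul_integral_condExp hm hs1 hs0 hpos' hi2
      ((hi4.congr hodds).cond _) hi3, ← hα, ← hψ']
  field_simp

/-- Proposition 1 (latent identifiability): under consistency, randomization,
CATE transportability, and positivity, the target parameter
`ψ = E[Y(1) − Y(0) | S=0]` satisfies both the g-formula and the inverse-odds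
weighting representation with the transformed outcome `Ỹ = (2A−1)Y/e(A|X)`. -/
theorem stmt1 {Ω 𝓧 𝓤 : Type*} [MeasurableSpace Ω] [MeasurableSpace 𝓧] [MeasurableSpace 𝓤]
    (μ : Measure Ω) [IsProbabilityMeasure μ]
    (X : Ω → 𝓧) (U : Ω → 𝓤) (hX : Measurable X) (hU : Measurable U)
    (S A Y Y0 Y1 : Ω → ℝ) (hS : Measurable S) (hA : Measurable A)
    (hY : Measurable Y) (hY0 : Measurable Y0) (hY1 : Measurable Y1)
    (hSbin : ∀ ω, S ω = 0 ∨ S ω = 1) (hAbin : ∀ ω, A ω = 0 ∨ A ω = 1)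
    (α : ℝ) (hα : α = (μ {ω | S ω = 0}).toReal) (hαpos : 0 < α) (hα1 : α < 1)
    -- the known propensity score `e(1|X) = P(A=1 | X, S=1)`, strictly between 0 and 1
    (e1 : 𝓧 → ℝ) (he1 : Measurable e1) (hepos : ∀ x, 0 < e1 x ∧ e1 x < 1)
    (heA : (fun ω => e1 (X ω)) =ᵐ[μ[|{ω | S ω = 1}]]
      condExp (MeasurableSpace.comap X inferInstance) (μ[|{ω | S ω = 1}])
        (Set.indicator {ω | A ω = 1} (fun _ => (1 : ℝ))))
    -- Assumption 1(i): consistency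
    (hcons : ∀ ω, S ω = 1 → ((A ω = 1 → Y ω = Y1 ω) ∧ (A ω = 0 → Y ω = Y0 ω)))
    -- Assumption 1(ii): randomization `(Y(1), Y(0), U) ⟂ A | (X, S=1)`
    (hrand : CondIndepFunAE X (fun ω => (Y1 ω, Y0 ω, U ω)) A (μ[|{ω | S ω = 1}]))
    -- Assumption 1(iii): CATE transportability given `(X, U)`
    (htrans : condExp (MeasurableSpace.comap (fun ω => (X ω, U ω)) inferInstance)
          (μ[|{ω | S ω = 0}]) (fun ω => Y1 ω - Y0 ω)
        =ᵐ[μ[|{ω | S ω = 0}]]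
        condExp (MeasurableSpace.comap (fun ω => (X ω, U ω)) inferInstance)
          (μ[|{ω | S ω = 1}]) (fun ω => Y1 ω - Y0 ω))
    -- versions of the conditional trial-participation probabilities `P(S=s | X, U)`
    (p0 p1 : Ω → ℝ)
    (hp0 : p0 =ᵐ[μ] condExp (MeasurableSpace.comap (fun ω => (X ω, U ω)) inferInstance) μ
      (Set.indicator {ω | S ω = 0} (fun _ => (1 : ℝ))))
    (hp1 : p1 =ᵐ[μ] condExp (MeasurableSpace.comap (fun ω => (X ω, U ω)) inferInstance) μ
      (Set.indicator {ω | S ω = 1} (fun _ => (1 : ℝ))))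
    -- Assumption 1(iv): positivity
    (hpos : ∀ᵐ ω ∂(μ[|{ω | S ω = 0}]), 0 < p1 ω)
    -- the transformed outcome `Ỹ = (2A−1)Y / e(A|X)`
    (Ytil : Ω → ℝ)
    (hYtil : ∀ ω, Ytil ω =
      (2 * A ω - 1) * Y ω / (if A ω = 1 then e1 (X ω) else 1 - e1 (X ω)))
    -- target parameter
    (ψ : ℝ) (hψ : ψ = ∫ ω, (Y1 ω - Y0 ω) ∂(μ[|{ω | S ω = 0}]))
    -- integrability
    (hi1 : Integrable (fun ω => Y1 ω - Y0 ω) (μ[|{ω | S ω = 0}]))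
    (hi1' : Integrable (fun ω => Y1 ω - Y0 ω) (μ[|{ω | S ω = 1}]))
    (hi2 : Integrable Ytil (μ[|{ω | S ω = 1}]))
    (hi3 : Integrable (fun ω => condExp (MeasurableSpace.comap (fun ω' => (X ω', U ω'))
      inferInstance) (μ[|{ω | S ω = 1}]) Ytil ω) (μ[|{ω | S ω = 0}]))
    (hi4 : Integrable (fun ω => (p0 ω / p1 ω) * Ytil ω) μ) :
    ψ = ∫ ω, condExp (MeasurableSpace.comap (fun ω' => (X ω', U ω')) inferInstance)
          (μ[|{ω | S ω = 1}]) Ytil ω ∂(μ[|{ω | S ω = 0}]) ∧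
      ψ = (1 / α) * ∫ ω in {ω | S ω = 1}, (p0 ω / p1 ω) * Ytil ω ∂μ :=
  stmt1_general μ X U hX hU S A Y Y0 Y1 hS hA hY0 hY1 hAbin α hα hαpos e1 he1 hepos heA hcons hrand
    htrans p0 p1 hp0 hp1 hpos Ytil hYtil ψ hψ hi2 hi3 hi4
end
end

section
/- Suppose Z ⟂ W | (X,U,S=1) and W ⟂ S | (X,U). If q* is a square-integrable function of (Z,X) satisfying E[q*(Z,X) | X,U,S=1] = P(S=0|X,U)/P(S=1|X,U) almost surely, then q* also satisfies E[q*(Z,X) | W,X,S=1] = P(S=0|W,X)/P(S=1|W,X) almost surely. That is, Q* ⊂ Q. -/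
/-!
By the π-λ theorem it suffices to test the claimed identity against the rectangles
`ψ(W) χ(X)` with `ψ = 1_{B_w}`, `χ = 1_{B_x}`. Given `S = 1`, the independence `Z ⟂ W | (X,U)`
allows `ψ(W)` to be replaced by `E[ψ(W) | X,U,S=1]`, so the bridge equation turns
`E[ψ(W) χ(X) q*(Z,X) | S=1]` into `E[ψ(W) χ(X) P(S=0|X,U)/P(S=1|X,U) | S=1]`.
Since `W ⟂ S | (X,U)`, reweighting the population `S = 1` by these odds gives the population
`S = 0`, i.e. the last quantity is `E[ψ(W) χ(X) 1{S=0}] / P(S=1)`. Reweighting with the odds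
given `(W,X)`, of which `ψ(W) χ(X)` is a function, leads back to
`E[ψ(W) χ(X) P(S=0|W,X)/P(S=1|W,X) | S=1]`.
-/

open MeasureTheory ProbabilityTheory Set

noncomputable section

open Filter

namespace TrialBridge

variable {Ω : Type*} {m m0 : MeasurableSpace Ω} {μ : Measure Ω}

lemma indicator_eq_indicator_one_mul (s : Set Ω) (f : Ω → ℝ) :
    s.indicator f = fun ω => s.indicator 1 ω * f ω := by
  ext ω
  by_cases h : ω ∈ s <;> simp [h]

lemma indicator_preimage_eq_mul {α : Type*} (Y : Ω → α) (A : Set α) (f : Ω → ℝ) :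
    (Y ⁻¹' A).indicator f = fun ω => A.indicator 1 (Y ω) * f ω := by
  ext ω
  by_cases h : Y ω ∈ A <;> simp [h]

lemma abs_indicator_one_le {α : Type*} (A : Set α) (a : α) : |A.indicator (1 : α → ℝ) a| ≤ 1 := by
  by_cases h : a ∈ A <;> simp [h]

lemma integral_mul_condExp (hm : m ≤ m0) [SigmaFinite (μ.trim hm)] {f g : Ω → ℝ}
    (hg : AEStronglyMeasurable[m] g μ) (hgf : Integrable (g * f) μ) (hf : Integrable f μ) :
    ∫ ω, g ω * μ[f | m] ω ∂μ = ∫ ω, g ω * f ω ∂μ :=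
  calc ∫ ω, g ω * μ[f | m] ω ∂μ = ∫ ω, μ[g * f | m] ω ∂μ :=
        integral_congr_ae (condExp_mul_of_aestronglyMeasurable_left hg hgf hf).symm
    _ = ∫ ω, g ω * f ω ∂μ := integral_condExp hm

lemma setIntegral_eq_of_isPiSystem (hm : m ≤ m0) {C : Set (Set Ω)} (hgen : m = .generateFrom C)
    (hC : IsPiSystem C) {f g : Ω → ℝ} (hf : Integrable f μ) (hg : Integrable g μ)
    (huniv : ∫ ω, f ω ∂μ = ∫ ω, g ω ∂μ) (hfg : ∀ s ∈ C, ∫ ω in s, f ω ∂μ = ∫ ω in s, g ω ∂μ)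
    {s : Set Ω} (hs : MeasurableSet[m] s) : ∫ ω in s, f ω ∂μ = ∫ ω in s, g ω ∂μ := by
  induction s, hs using MeasurableSpace.induction_on_inter hgen hC with
  | empty => simp
  | basic t ht => exact hfg t ht
  | compl t ht ih =>
    have hf' := integral_add_compl (hm t ht) hf
    have hg' := integral_add_compl (hm t ht) hg
    linarith
  | iUnion t hdisj ht ih =>
    rw [integral_iUnion (fun i => hm _ (ht i)) hdisj hf.integrableOn,
      integral_iUnion (fun i => hm _ (ht i)) hdisj hg.integrableOn]
    exact tsum_congr ih

lemma comap_prodMk_eq_generateFrom {α β : Type*} [MeasurableSpace α] [MeasurableSpace β]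
    (Y₁ : Ω → α) (Y₂ : Ω → β) :
    MeasurableSpace.comap (fun ω => (Y₁ ω, Y₂ ω)) inferInstance = .generateFrom
      {s | ∃ t ∈ image2 (· ×ˢ ·) {A : Set α | MeasurableSet A} {B : Set β | MeasurableSet B},
        (fun ω => (Y₁ ω, Y₂ ω)) ⁻¹' t = s} := by
  rw [← generateFrom_prod, MeasurableSpace.comap_generateFrom]
  rfl

lemma condExp_prodMk_ae_eq_of_setIntegral_eq [IsFiniteMeasure μ] {α β : Type*}
    [MeasurableSpace α] [MeasurableSpace β] {Y₁ : Ω → α} {Y₂ : Ω → β}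
    (hY₁ : Measurable Y₁) (hY₂ : Measurable Y₂) {f g : Ω → ℝ}
    (hf : Integrable f μ) (hg : Integrable g μ)
    (hfg : ∀ A B, MeasurableSet A → MeasurableSet B →
      ∫ ω in Y₁ ⁻¹' A ∩ Y₂ ⁻¹' B, f ω ∂μ = ∫ ω in Y₁ ⁻¹' A ∩ Y₂ ⁻¹' B, g ω ∂μ) :
    μ[f | MeasurableSpace.comap (fun ω => (Y₁ ω, Y₂ ω)) inferInstance]
      =ᵐ[μ] μ[g | MeasurableSpace.comap (fun ω => (Y₁ ω, Y₂ ω)) inferInstance] := by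
  have hm := (hY₁.prodMk hY₂).comap_le
  have huniv : ∫ ω, f ω ∂μ = ∫ ω, g ω ∂μ := by
    simpa using hfg univ univ .univ .univ
  refine ae_eq_condExp_of_forall_setIntegral_eq hm hg
    (fun s _ _ => integrable_condExp.integrableOn) (fun s hs _ => ?_)
    stronglyMeasurable_condExp.aestronglyMeasurable
  rw [setIntegral_condExp hm hf hs]
  refine setIntegral_eq_of_isPiSystem hm (comap_prodMk_eq_generateFrom Y₁ Y₂)
    (isPiSystem_prod.comap _) hf hg huniv ?_ hs
  rintro _ ⟨_, ⟨A, hA, B, hB, rfl⟩, rfl⟩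
  exact hfg A B hA hB

lemma ae_norm_condExp_le_one {f : Ω → ℝ} (hf : ∀ ω, |f ω| ≤ 1) :
    ∀ᵐ ω ∂μ, ‖μ[f | m] ω‖ ≤ 1 := by
  simpa only [Real.norm_eq_abs] using ae_bdd_abs_condExp_of_ae_bdd_abs (ae_of_all μ hf)

lemma condExp_indicator_one_nonneg (s : Set Ω) : 0 ≤ᵐ[μ] μ[s.indicator (1 : Ω → ℝ) | m] :=
  condExp_nonneg (ae_of_all μ fun ω => indicator_nonneg (fun _ _ => zero_le_one) ω)

/-- On the `m`-measurable sets `{f ≤ n}` the function `f` is bounded, so the pull-out property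
applies there; monotone convergence then bounds `∫ in A, f` by `∫ f * μ[1_A | m]`. -/
lemma integrableOn_of_integrable_mul_condExp_indicator (hm : m ≤ m0) [IsFiniteMeasure μ]
    {A : Set Ω} (hA : MeasurableSet A) {f : Ω → ℝ} (hf : StronglyMeasurable[m] f)
    (hf0 : 0 ≤ᵐ[μ] f) (hfA : Integrable (fun ω => f ω * μ[A.indicator 1 | m] ω) μ) :
    IntegrableOn f A μ := by
  set φ : ℕ → Set Ω := fun n => {ω | f ω ≤ n}
  have hφ : ∀ n, MeasurableSet[m] (φ n) := fun n => measurableSet_le hf.measurable measurable_const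
  have hcover : AECover (μ.restrict A) atTop φ :=
    ⟨ae_of_all _ fun ω => tendsto_natCast_atTop_atTop.eventually_ge_atTop (f ω),
      fun n => hm _ (hφ n)⟩
  have hbound : ∀ n : ℕ, ∀ᵐ ω ∂μ, ‖(φ n).indicator f ω‖ ≤ n := fun n => by
    filter_upwards [hf0] with ω h0
    by_cases h : ω ∈ φ n
    · rw [indicator_of_mem h, Real.norm_of_nonneg h0]
      exact h
    · simp [h]
  have hφf : ∀ n, AEStronglyMeasurable[m] ((φ n).indicator f) μ := fun n =>
    (hf.indicator (hφ n)).aestronglyMeasurable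
  refine hcover.integrable_of_integral_bounded_of_nonneg_ae (∫ ω, f ω * μ[A.indicator 1 | m] ω ∂μ)
    (fun n => ?_) (ae_restrict_of_ae hf0)
    (Eventually.of_forall fun n => ?_)
  · refine Integrable.of_bound (hf.mono hm).aestronglyMeasurable n ?_
    filter_upwards [ae_restrict_mem (hm _ (hφ n)), ae_restrict_of_ae (ae_restrict_of_ae hf0)]
      with ω hω h0
    rwa [Real.norm_of_nonneg h0]
  · calc ∫ ω in φ n, f ω ∂μ.restrict A
        = ∫ ω, (φ n).indicator f ω * A.indicator 1 ω ∂μ := by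
          rw [Measure.restrict_restrict (hm _ (hφ n)), inter_comm,
            ← setIntegral_indicator (hm _ (hφ n)), ← integral_indicator hA,
            indicator_eq_indicator_one_mul A]
          simp_rw [mul_comm]
      _ = ∫ ω, (φ n).indicator f ω * μ[A.indicator 1 | m] ω ∂μ :=
          (integral_mul_condExp hm (hφf n)
            (((integrable_const 1).indicator hA).bdd_mul ((hφf n).mono hm) (hbound n))
            ((integrable_const 1).indicator hA)).symm
      _ ≤ ∫ ω, f ω * μ[A.indicator 1 | m] ω ∂μ := by
          refine integral_mono_ae (integrable_condExp.bdd_mul ((hφf n).mono hm) (hbound n)) hfA ?_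
          filter_upwards [hf0, condExp_indicator_one_nonneg A] with ω h0 hA0
          gcongr
          exact indicator_le_self' (fun _ _ => h0) ω

lemma setIntegral_preimage_inter_eq_integral_mul {α β : Type*} [MeasurableSpace α]
    [MeasurableSpace β] {Y₁ : Ω → α} {Y₂ : Ω → β} (hY₁ : Measurable Y₁) (hY₂ : Measurable Y₂)
    {A : Set α} {B : Set β} (hA : MeasurableSet A) (hB : MeasurableSet B) (f : Ω → ℝ) :
    ∫ ω in Y₁ ⁻¹' A ∩ Y₂ ⁻¹' B, f ω ∂μ
      = ∫ ω, A.indicator 1 (Y₁ ω) * (B.indicator 1 (Y₂ ω) * f ω) ∂μ := by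
  rw [← integral_indicator ((hY₁ hA).inter (hY₂ hB)), ← indicator_indicator,
    indicator_preimage_eq_mul, indicator_preimage_eq_mul]

lemma integrableOn_div_of_ae_eq_condExp (hm : m ≤ m0) [IsFiniteMeasure μ] {A B : Set Ω}
    (hA : MeasurableSet A) {pA pB : Ω → ℝ} (hpA : pA =ᵐ[μ] μ[A.indicator 1 | m])
    (hpB : pB =ᵐ[μ] μ[B.indicator 1 | m]) (hpos : ∀ᵐ ω ∂μ, 0 < pA ω) :
    IntegrableOn (fun ω => pB ω / pA ω) A μ := by
  have hodds : IntegrableOn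
      (fun ω => μ[B.indicator (1 : Ω → ℝ) | m] ω / μ[A.indicator 1 | m] ω) A μ := by
    refine integrableOn_of_integrable_mul_condExp_indicator hm hA
      ((stronglyMeasurable_condExp.measurable.div
        stronglyMeasurable_condExp.measurable).stronglyMeasurable) ?_
      ((integrable_condExp (m := m) (f := B.indicator 1)).congr ?_)
    · filter_upwards [condExp_indicator_one_nonneg B, condExp_indicator_one_nonneg A] with ω hB hA
      exact div_nonneg hB hA
    · filter_upwards [hpA, hpos] with ω h h0
      rw [← h, div_mul_cancel₀ _ h0.ne']
  refine hodds.congr_fun_ae (ae_restrict_of_ae ?_)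
  filter_upwards [hpA, hpB] with ω hA hB
  rw [hA, hB]

lemma condExp_mul_ae_eq_of_stronglyMeasurable (hm : m ≤ m0) [IsFiniteMeasure μ] {f g : Ω → ℝ}
    {C : ℝ} (hf : StronglyMeasurable[m] f) (hfC : ∀ᵐ ω ∂μ, ‖f ω‖ ≤ C) (hg : Integrable g μ) :
    μ[f * g | m] =ᵐ[μ] μ[f | m] * μ[g | m] := by
  rw [condExp_of_stronglyMeasurable hm hf (.of_bound (hf.mono hm).aestronglyMeasurable C hfC)]
  exact condExp_stronglyMeasurable_mul_of_bound hm hf hg C hfC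

lemma setIntegral_mul_div_eq (hm : m ≤ m0) [IsFiniteMeasure μ] {A B : Set Ω}
    (hA : MeasurableSet A) (hB : MeasurableSet B) {pA pB f g : Ω → ℝ} {C D : ℝ}
    (hpA : pA =ᵐ[μ] μ[A.indicator 1 | m]) (hpB : pB =ᵐ[μ] μ[B.indicator 1 | m])
    (hpos : ∀ᵐ ω ∂μ, 0 < pA ω) (hf : AEStronglyMeasurable f μ) (hfC : ∀ᵐ ω ∂μ, ‖f ω‖ ≤ C)
    (hfA : μ[f * A.indicator 1 | m] =ᵐ[μ] μ[f | m] * μ[A.indicator 1 | m])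
    (hfB : μ[f * B.indicator 1 | m] =ᵐ[μ] μ[f | m] * μ[B.indicator 1 | m])
    (hg : StronglyMeasurable[m] g) (hgD : ∀ᵐ ω ∂μ, ‖g ω‖ ≤ D) :
    ∫ ω in A, f ω * (g ω * (pB ω / pA ω)) ∂μ = ∫ ω in B, f ω * g ω ∂μ := by
  have hodds := integrableOn_div_of_ae_eq_condExp hm hA hpA hpB hpos
  have hodds_m : AEStronglyMeasurable[m] (fun ω => pB ω / pA ω) μ :=
    (stronglyMeasurable_condExp.measurable.div
      stronglyMeasurable_condExp.measurable).aestronglyMeasurable.congr (hpB.div hpA).symm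
  have hfgC : ∀ᵐ ω ∂μ, ‖g ω * f ω‖ ≤ D * C := by
    filter_upwards [hfC, hgD] with ω hf hg
    rw [norm_mul]
    exact mul_le_mul hg hf (norm_nonneg _) ((norm_nonneg _).trans hg)
  have hfgm : AEStronglyMeasurable (fun ω => g ω * f ω) μ :=
    (hg.mono hm).aestronglyMeasurable.mul hf
  have hind : ∀ s : Set Ω, MeasurableSet s → Integrable (f * s.indicator 1) μ := fun s hs =>
    ((integrable_const 1).indicator hs).bdd_mul hf hfC
  calc ∫ ω in A, f ω * (g ω * (pB ω / pA ω)) ∂μ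
      = ∫ ω, (g ω * f ω) * A.indicator (fun ω => pB ω / pA ω) ω ∂μ := by
        rw [← integral_indicator hA, indicator_eq_indicator_one_mul A,
          indicator_eq_indicator_one_mul A (fun ω => pB ω / pA ω)]
        congr 1 with ω
        ring
    _ = ∫ ω, (g ω * (pB ω / pA ω)) * (f ω * A.indicator 1 ω) ∂μ := by
        rw [indicator_eq_indicator_one_mul A (fun ω => pB ω / pA ω)]
        congr 1 with ω
        ring
    _ = ∫ ω, (g ω * (pB ω / pA ω)) * μ[f * A.indicator (1 : Ω → ℝ) | m] ω ∂μ := by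
        refine (integral_mul_condExp hm (hg.aestronglyMeasurable.mul hodds_m) ?_ (hind A hA)).symm
        refine ((hodds.integrable_indicator hA).bdd_mul hfgm hfgC).congr (ae_of_all _ fun ω => ?_)
        simp only [indicator_eq_indicator_one_mul A (fun ω => pB ω / pA ω), Pi.mul_apply]
        ring
    _ = ∫ ω, g ω * μ[f * B.indicator (1 : Ω → ℝ) | m] ω ∂μ := by
        refine integral_congr_ae ?_
        filter_upwards [hfA, hfB, hpA, hpB, hpos] with ω hA hB hpA hpB hpos
        simp only [hA, hB, Pi.mul_apply, ← hpA, ← hpB]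
        field_simp
    _ = ∫ ω, g ω * (f ω * B.indicator 1 ω) ∂μ :=
        integral_mul_condExp hm (hg.aestronglyMeasurable) ((hind B hB).bdd_mul
          (hg.mono hm).aestronglyMeasurable hgD) (hind B hB)
    _ = ∫ ω in B, f ω * g ω ∂μ := by
        rw [← integral_indicator hB, indicator_eq_indicator_one_mul B (fun ω => f ω * g ω)]
        congr 1 with ω
        ring

lemma setIntegral_mul_div_eq_of_stronglyMeasurable (hm : m ≤ m0) [IsFiniteMeasure μ]
    {A B : Set Ω} (hA : MeasurableSet A) (hB : MeasurableSet B) {pA pB f g : Ω → ℝ} {C D : ℝ}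
    (hpA : pA =ᵐ[μ] μ[A.indicator 1 | m]) (hpB : pB =ᵐ[μ] μ[B.indicator 1 | m])
    (hpos : ∀ᵐ ω ∂μ, 0 < pA ω) (hf : StronglyMeasurable[m] f) (hfC : ∀ᵐ ω ∂μ, ‖f ω‖ ≤ C)
    (hg : StronglyMeasurable[m] g) (hgD : ∀ᵐ ω ∂μ, ‖g ω‖ ≤ D) :
    ∫ ω in A, f ω * (g ω * (pB ω / pA ω)) ∂μ = ∫ ω in B, f ω * g ω ∂μ :=
  setIntegral_mul_div_eq hm hA hB hpA hpB hpos (hf.mono hm).aestronglyMeasurable hfC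
    (condExp_mul_ae_eq_of_stronglyMeasurable hm hf hfC ((integrable_const 1).indicator hA))
    (condExp_mul_ae_eq_of_stronglyMeasurable hm hf hfC ((integrable_const 1).indicator hB)) hg hgD

lemma measure_ne_zero_of_ae_eq_condExp_indicator [NeZero μ] {s : Set Ω} {p : Ω → ℝ}
    (hp : p =ᵐ[μ] μ[s.indicator 1 | m]) (hpos : ∀ᵐ ω ∂μ, 0 < p ω) : μ s ≠ 0 := by
  intro hs
  have hzero : μ[s.indicator (1 : Ω → ℝ) | m] =ᵐ[μ] 0 := by
    rw [← condExp_zero (m := m) (μ := μ) (E := ℝ)]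
    exact condExp_congr_ae (indicator_ae_eq_zero.mpr (by simp [hs]))
  obtain ⟨ω, hω, hp, h0⟩ := (hpos.and (hp.and hzero)).exists
  exact hω.ne' (hp.trans h0)

lemma integral_cond (s : Set Ω) (f : Ω → ℝ) :
    ∫ ω, f ω ∂μ[|s] = (μ s).toReal⁻¹ * ∫ ω in s, f ω ∂μ := by
  rw [ProbabilityTheory.cond, integral_smul_measure, ENNReal.toReal_inv, smul_eq_mul]

lemma integrable_cond_of_integrableOn {s : Set Ω} (hs : μ s ≠ 0) {f : Ω → ℝ}
    (hf : IntegrableOn f s μ) :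
    Integrable f μ[|s] :=
  hf.smul_measure (ENNReal.inv_ne_top.mpr hs)

section CondIndep

variable {δ α β γ : Type*} [MeasurableSpace δ] [MeasurableSpace α] [MeasurableSpace β]
  [MeasurableSpace γ]

lemma _root_.CondIndepFunAE.condExp_mul_indicator_preimage {c : Ω → δ} {W : Ω → β} {S : Ω → γ}
    (h : CondIndepFunAE c W S μ) {ψ : β → ℝ} (hψ : Measurable ψ) (hψ1 : ∀ b, |ψ b| ≤ 1)
    {T : Set γ} (hT : MeasurableSet T) :
    μ[(fun ω => ψ (W ω)) * (S ⁻¹' T).indicator 1 | .comap c inferInstance]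
      =ᵐ[μ] μ[fun ω => ψ (W ω) | .comap c inferInstance]
        * μ[(S ⁻¹' T).indicator 1 | .comap c inferInstance] :=
  h ψ (T.indicator 1) hψ (measurable_const.indicator hT) hψ1 (abs_indicator_one_le T)

lemma _root_.CondIndepFunAE.setIntegral_preimage_inter_eq [IsFiniteMeasure μ] {c : Ω → δ}
    {Z : Ω → β} {W : Ω → γ} {X : Ω → α}
    (hc : Measurable c) (hZ : Measurable Z) (hW : Measurable W)
    (hX : Measurable[.comap c inferInstance] X) (hZW : CondIndepFunAE c Z W μ)
    {ψ : γ → ℝ} (hψ : Measurable ψ) (hψ1 : ∀ w, |ψ w| ≤ 1) {A : Set β} {B : Set α}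
    (hA : MeasurableSet A) (hB : MeasurableSet B) :
    ∫ ω in Z ⁻¹' A ∩ X ⁻¹' B, ψ (W ω) ∂μ
      = ∫ ω in Z ⁻¹' A ∩ X ⁻¹' B, μ[fun ω => ψ (W ω) | .comap c inferInstance] ω ∂μ := by
  have hmc := hc.comap_le
  set h := μ[fun ω => ψ (W ω) | .comap c inferInstance]
  have hψi : Integrable (fun ω => ψ (W ω)) μ :=
    .of_bound (hψ.comp hW).aestronglyMeasurable 1 (ae_of_all _ fun ω => hψ1 (W ω))
  have hAZ1 : ∀ᵐ ω ∂μ, ‖A.indicator (1 : β → ℝ) (Z ω)‖ ≤ 1 :=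
    ae_of_all _ fun ω => abs_indicator_one_le A (Z ω)
  have hAZm : AEStronglyMeasurable (fun ω => A.indicator (1 : β → ℝ) (Z ω)) μ :=
    ((measurable_const.indicator hA).comp hZ).aestronglyMeasurable
  have hXB : MeasurableSet[.comap c inferInstance] (X ⁻¹' B) := hX hB
  have hAZi : Integrable (fun ω => A.indicator (1 : β → ℝ) (Z ω)) μ := .of_bound hAZm 1 hAZ1
  rw [inter_comm, ← setIntegral_indicator (hZ hA), ← setIntegral_indicator (hZ hA),
    indicator_preimage_eq_mul, indicator_preimage_eq_mul]
  calc ∫ ω in X ⁻¹' B, A.indicator 1 (Z ω) * ψ (W ω) ∂μ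
      = ∫ ω in X ⁻¹' B,
          μ[(fun ω => A.indicator 1 (Z ω)) * (fun ω => ψ (W ω)) | .comap c inferInstance] ω ∂μ :=
        (setIntegral_condExp hmc (hψi.bdd_mul hAZm hAZ1) hXB).symm
    _ = ∫ ω in X ⁻¹' B, μ[(fun ω => A.indicator 1 (Z ω)) * h | .comap c inferInstance] ω ∂μ := by
        refine integral_congr_ae (ae_restrict_of_ae ?_)
        filter_upwards [hZW (A.indicator 1) ψ (measurable_const.indicator hA) hψ
          (abs_indicator_one_le A) hψ1,
          condExp_mul_of_stronglyMeasurable_right stronglyMeasurable_condExp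
            (integrable_condExp.bdd_mul hAZm hAZ1) hAZi] with ω h1 h2
        rw [h2]
        exact h1
    _ = ∫ ω in X ⁻¹' B, A.indicator 1 (Z ω) * h ω ∂μ :=
        setIntegral_condExp hmc (integrable_condExp.bdd_mul hAZm hAZ1) hXB

lemma _root_.CondIndepFunAE.setIntegral_mul_div_eq [IsFiniteMeasure μ] {c : Ω → δ}
    {W : Ω → β} {S : Ω → γ} (hc : Measurable c) (hW : Measurable W) (hS : Measurable S)
    (hWS : CondIndepFunAE c W S μ) {T₁ T₀ : Set γ} (hT₁ : MeasurableSet T₁)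
    (hT₀ : MeasurableSet T₀) {p₁ p₀ g : Ω → ℝ} {D : ℝ}
    (hp₁ : p₁ =ᵐ[μ] μ[(S ⁻¹' T₁).indicator 1 | .comap c inferInstance])
    (hp₀ : p₀ =ᵐ[μ] μ[(S ⁻¹' T₀).indicator 1 | .comap c inferInstance])
    (hpos : ∀ᵐ ω ∂μ, 0 < p₁ ω) {ψ : β → ℝ} (hψ : Measurable ψ) (hψ1 : ∀ b, |ψ b| ≤ 1)
    (hg : StronglyMeasurable[.comap c inferInstance] g) (hgD : ∀ᵐ ω ∂μ, ‖g ω‖ ≤ D) :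
    ∫ ω in S ⁻¹' T₁, ψ (W ω) * (g ω * (p₀ ω / p₁ ω)) ∂μ = ∫ ω in S ⁻¹' T₀, ψ (W ω) * g ω ∂μ :=
  TrialBridge.setIntegral_mul_div_eq hc.comap_le (hS hT₁) (hS hT₀) hp₁ hp₀ hpos
    (hψ.comp hW).aestronglyMeasurable (ae_of_all _ fun ω => hψ1 (W ω))
    (hWS.condExp_mul_indicator_preimage hψ hψ1 hT₁)
    (hWS.condExp_mul_indicator_preimage hψ hψ1 hT₀) hg hgD

lemma _root_.CondIndepFunAE.integral_cond_mul_div_eq [IsFiniteMeasure μ] {c : Ω → δ}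
    {W : Ω → β} {S : Ω → γ} (hc : Measurable c) (hW : Measurable W) (hS : Measurable S)
    (hWS : CondIndepFunAE c W S μ) (hm : m ≤ m0) {T₁ T₀ : Set γ} (hT₁ : MeasurableSet T₁)
    (hT₀ : MeasurableSet T₀) {p₁ p₀ r₁ r₀ g : Ω → ℝ} {D : ℝ}
    (hp₁ : p₁ =ᵐ[μ] μ[(S ⁻¹' T₁).indicator 1 | .comap c inferInstance])
    (hp₀ : p₀ =ᵐ[μ] μ[(S ⁻¹' T₀).indicator 1 | .comap c inferInstance])
    (hp_pos : ∀ᵐ ω ∂μ, 0 < p₁ ω) (hr₁ : r₁ =ᵐ[μ] μ[(S ⁻¹' T₁).indicator 1 | m])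
    (hr₀ : r₀ =ᵐ[μ] μ[(S ⁻¹' T₀).indicator 1 | m]) (hr_pos : ∀ᵐ ω ∂μ, 0 < r₁ ω)
    {ψ : β → ℝ} (hψ : Measurable ψ) (hψ1 : ∀ b, |ψ b| ≤ 1) (hψW : Measurable[m] fun ω => ψ (W ω))
    (hgc : StronglyMeasurable[.comap c inferInstance] g) (hgm : StronglyMeasurable[m] g)
    (hgD : ∀ᵐ ω ∂μ, ‖g ω‖ ≤ D) :
    ∫ ω, ψ (W ω) * (g ω * (p₀ ω / p₁ ω)) ∂μ[|S ⁻¹' T₁]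
      = ∫ ω, ψ (W ω) * (g ω * (r₀ ω / r₁ ω)) ∂μ[|S ⁻¹' T₁] := by
  rw [integral_cond, integral_cond,
    hWS.setIntegral_mul_div_eq hc hW hS hT₁ hT₀ hp₁ hp₀ hp_pos hψ hψ1 hgc hgD,
    setIntegral_mul_div_eq_of_stronglyMeasurable hm (hS hT₁) (hS hT₀) hr₁ hr₀ hr_pos
      hψW.stronglyMeasurable (ae_of_all _ fun ω => hψ1 (W ω)) hgm hgD]

lemma _root_.CondIndepFunAE.integral_mul_condExp_eq [IsFiniteMeasure μ] {c : Ω → δ}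
    {Z : Ω → β} {W : Ω → γ} {X : Ω → α}
    (hc : Measurable c) (hZ : Measurable Z) (hW : Measurable W)
    (hX : Measurable[.comap c inferInstance] X) (hZW : CondIndepFunAE c Z W μ)
    {ψ : γ → ℝ} (hψ : Measurable ψ) (hψ1 : ∀ w, |ψ w| ≤ 1) {F : β × α → ℝ} (hF : Measurable F)
    (hFi : Integrable (fun ω => F (Z ω, X ω)) μ) :
    ∫ ω, F (Z ω, X ω) * μ[fun ω => ψ (W ω) | .comap c inferInstance] ω ∂μ
      = ∫ ω, F (Z ω, X ω) * ψ (W ω) ∂μ := by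
  have hX' : Measurable X := hX.mono hc.comap_le le_rfl
  have hmZX := (hZ.prodMk hX').comap_le
  have hFm : AEStronglyMeasurable[.comap (fun ω => (Z ω, X ω)) inferInstance]
      (fun ω => F (Z ω, X ω)) μ :=
    (hF.comp (comap_measurable _)).aestronglyMeasurable
  have hψi : Integrable (fun ω => ψ (W ω)) μ :=
    .of_bound (hψ.comp hW).aestronglyMeasurable 1 (ae_of_all _ fun ω => hψ1 (W ω))
  have hh1 := ae_norm_condExp_le_one (m := .comap c inferInstance) (μ := μ) fun ω => hψ1 (W ω)
  calc ∫ ω, F (Z ω, X ω) * μ[fun ω => ψ (W ω) | .comap c inferInstance] ω ∂μ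
      = ∫ ω, F (Z ω, X ω) * μ[μ[fun ω => ψ (W ω) | .comap c inferInstance]
          | .comap (fun ω => (Z ω, X ω)) inferInstance] ω ∂μ :=
        (integral_mul_condExp hmZX hFm
          (hFi.mul_bdd (stronglyMeasurable_condExp.mono hc.comap_le).aestronglyMeasurable hh1)
          integrable_condExp).symm
    _ = ∫ ω, F (Z ω, X ω) * μ[fun ω => ψ (W ω)
          | .comap (fun ω => (Z ω, X ω)) inferInstance] ω ∂μ := by
        refine integral_congr_ae ?_
        filter_upwards [condExp_prodMk_ae_eq_of_setIntegral_eq hZ hX' hψi integrable_condExp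
          fun A B hA hB => hZW.setIntegral_preimage_inter_eq hc hZ hW hX hψ hψ1 hA hB] with ω hω
        rw [hω]
    _ = ∫ ω, F (Z ω, X ω) * ψ (W ω) ∂μ :=
        integral_mul_condExp hmZX hFm
          (hFi.mul_bdd (hψ.comp hW).aestronglyMeasurable (ae_of_all _ fun ω => hψ1 (W ω))) hψi

lemma _root_.CondIndepFunAE.integral_mul_mul_eq_of_condExp_ae_eq [IsFiniteMeasure μ]
    {c : Ω → δ} {Z : Ω → β} {W : Ω → γ} {X : Ω → α}
    (hc : Measurable c) (hZ : Measurable Z) (hW : Measurable W)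
    (hX : Measurable[.comap c inferInstance] X) (hZW : CondIndepFunAE c Z W μ)
    {ψ : γ → ℝ} (hψ : Measurable ψ) (hψ1 : ∀ w, |ψ w| ≤ 1)
    {χ : α → ℝ} (hχ : Measurable χ) (hχ1 : ∀ x, |χ x| ≤ 1)
    {q : β × α → ℝ} (hq : Measurable q) (hqi : Integrable (fun ω => q (Z ω, X ω)) μ)
    {G : Ω → ℝ} (hG : μ[fun ω => q (Z ω, X ω) | .comap c inferInstance] =ᵐ[μ] G) :
    ∫ ω, ψ (W ω) * (χ (X ω) * q (Z ω, X ω)) ∂μ = ∫ ω, ψ (W ω) * (χ (X ω) * G ω) ∂μ := by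
  have hmc := hc.comap_le
  have hχX : StronglyMeasurable[.comap c inferInstance] (fun ω => χ (X ω)) :=
    (hχ.comp hX).stronglyMeasurable
  have hχX1 : ∀ᵐ ω ∂μ, ‖χ (X ω)‖ ≤ 1 := ae_of_all _ fun ω => hχ1 (X ω)
  have hψi : Integrable (fun ω => ψ (W ω)) μ :=
    .of_bound (hψ.comp hW).aestronglyMeasurable 1 (ae_of_all _ fun ω => hψ1 (W ω))
  have hh1 := ae_norm_condExp_le_one (m := .comap c inferInstance) (μ := μ) fun ω => hψ1 (W ω)
  have hχh1 : ∀ᵐ ω ∂μ,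
      ‖χ (X ω) * μ[fun ω => ψ (W ω) | .comap c inferInstance] ω‖ ≤ 1 := by
    filter_upwards [hχX1, hh1] with ω h1 h2
    rw [norm_mul]
    exact mul_le_one₀ h1 (norm_nonneg _) h2
  calc ∫ ω, ψ (W ω) * (χ (X ω) * q (Z ω, X ω)) ∂μ
      = ∫ ω, (χ (X ω) * q (Z ω, X ω)) * ψ (W ω) ∂μ := by
        congr 1 with ω
        ring
    _ = ∫ ω, (χ (X ω) * q (Z ω, X ω)) * μ[fun ω => ψ (W ω) | .comap c inferInstance] ω ∂μ :=
        (hZW.integral_mul_condExp_eq hc hZ hW hX hψ hψ1 (F := fun p => χ p.2 * q p)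
          ((hχ.comp measurable_snd).mul hq)
          (hqi.bdd_mul (hχX.mono hmc).aestronglyMeasurable hχX1)).symm
    _ = ∫ ω, (χ (X ω) * μ[fun ω => ψ (W ω) | .comap c inferInstance] ω) * q (Z ω, X ω) ∂μ := by
        congr 1 with ω
        ring
    _ = ∫ ω, (χ (X ω) * μ[fun ω => ψ (W ω) | .comap c inferInstance] ω)
          * μ[fun ω => q (Z ω, X ω) | .comap c inferInstance] ω ∂μ :=
        (integral_mul_condExp hmc (hχX.mul stronglyMeasurable_condExp).aestronglyMeasurable
          (hqi.bdd_mul ((hχX.mul stronglyMeasurable_condExp).mono hmc).aestronglyMeasurable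
            hχh1) hqi).symm
    _ = ∫ ω, (χ (X ω) * μ[fun ω => q (Z ω, X ω) | .comap c inferInstance] ω)
          * μ[fun ω => ψ (W ω) | .comap c inferInstance] ω ∂μ := by
        congr 1 with ω
        ring
    _ = ∫ ω, (χ (X ω) * μ[fun ω => q (Z ω, X ω) | .comap c inferInstance] ω) * ψ (W ω) ∂μ :=
        integral_mul_condExp hmc (hχX.mul stronglyMeasurable_condExp).aestronglyMeasurable
          ((integrable_condExp.bdd_mul (hχX.mono hmc).aestronglyMeasurable hχX1).mul_bdd
            (hψ.comp hW).aestronglyMeasurable (ae_of_all _ fun ω => hψ1 (W ω))) hψi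
    _ = ∫ ω, ψ (W ω) * (χ (X ω) * G ω) ∂μ := by
        refine integral_congr_ae ?_
        filter_upwards [hG] with ω hω
        rw [hω]
        ring

end CondIndep

end TrialBridge

open TrialBridge

theorem stmt3_general {Ω 𝓧 𝓤 𝓦 𝓩 : Type*} [MeasurableSpace Ω] [MeasurableSpace 𝓧]
    [MeasurableSpace 𝓤] [MeasurableSpace 𝓦] [MeasurableSpace 𝓩]
    (μ : Measure Ω) [IsProbabilityMeasure μ]
    (X : Ω → 𝓧) (U : Ω → 𝓤) (W : Ω → 𝓦) (Z : Ω → 𝓩)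
    (hX : Measurable X) (hU : Measurable U) (hW : Measurable W) (hZ : Measurable Z)
    (S : Ω → ℝ) (hS : Measurable S)
    -- Assumption 2(i): `Z ⟂ W | (X, U, S=1)`
    (hZW : CondIndepFunAE (fun ω => (X ω, U ω)) Z W (μ[|{ω | S ω = 1}]))
    -- Assumption 2(iii): `W ⟂ S | (X, U)`
    (hWS : CondIndepFunAE (fun ω => (X ω, U ω)) W S μ)
    -- versions of `P(S=s | X, U)` with positivity
    (p0 p1 : Ω → ℝ)
    (hp0 : p0 =ᵐ[μ] condExp (MeasurableSpace.comap (fun ω => (X ω, U ω)) inferInstance) μ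
      (Set.indicator {ω | S ω = 0} (fun _ => (1 : ℝ))))
    (hp1 : p1 =ᵐ[μ] condExp (MeasurableSpace.comap (fun ω => (X ω, U ω)) inferInstance) μ
      (Set.indicator {ω | S ω = 1} (fun _ => (1 : ℝ))))
    (hp1pos : ∀ᵐ ω ∂μ, 0 < p1 ω)
    -- versions of `P(S=s | W, X)` with positivity
    (r0 r1 : Ω → ℝ)
    (hr0 : r0 =ᵐ[μ] condExp (MeasurableSpace.comap (fun ω => (W ω, X ω)) inferInstance) μ
      (Set.indicator {ω | S ω = 0} (fun _ => (1 : ℝ))))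
    (hr1 : r1 =ᵐ[μ] condExp (MeasurableSpace.comap (fun ω => (W ω, X ω)) inferInstance) μ
      (Set.indicator {ω | S ω = 1} (fun _ => (1 : ℝ))))
    (hr1pos : ∀ᵐ ω ∂μ, 0 < r1 ω)
    -- `q*` is a square-integrable full-data trial bridge function
    (q : 𝓩 × 𝓧 → ℝ) (hq : Measurable q)
    (hq2 : MemLp (fun ω => q (Z ω, X ω)) 2 (μ[|{ω | S ω = 1}]))
    (hstar : condExp (MeasurableSpace.comap (fun ω => (X ω, U ω)) inferInstance)
        (μ[|{ω | S ω = 1}]) (fun ω => q (Z ω, X ω))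
        =ᵐ[μ[|{ω | S ω = 1}]] fun ω => p0 ω / p1 ω) :
    condExp (MeasurableSpace.comap (fun ω => (W ω, X ω)) inferInstance)
        (μ[|{ω | S ω = 1}]) (fun ω => q (Z ω, X ω))
        =ᵐ[μ[|{ω | S ω = 1}]] fun ω => r0 ω / r1 ω := by
  have hm₂ := (hW.prodMk hX).comap_le
  have hs₁ : MeasurableSet {ω | S ω = 1} := hS (measurableSet_singleton 1)
  have hμs₁ : μ {ω | S ω = 1} ≠ 0 := measure_ne_zero_of_ae_eq_condExp_indicator hp1 hp1pos
  have := cond_isProbabilityMeasure hμs₁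
  have hXm₁ : Measurable[.comap (fun ω => (X ω, U ω)) inferInstance] X :=
    measurable_fst.comp (comap_measurable _)
  have hWm₂ : Measurable[.comap (fun ω => (W ω, X ω)) inferInstance] W :=
    measurable_fst.comp (comap_measurable _)
  have hXm₂ : Measurable[.comap (fun ω => (W ω, X ω)) inferInstance] X :=
    measurable_snd.comp (comap_measurable _)
  have hqi : Integrable (fun ω => q (Z ω, X ω)) μ[|{ω | S ω = 1}] := hq2.integrable one_le_two
  have hri : Integrable (fun ω => r0 ω / r1 ω) μ[|{ω | S ω = 1}] := integrable_cond_of_integrableOn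
    hμs₁ (integrableOn_div_of_ae_eq_condExp hm₂ hs₁ hr1 hr0 hr1pos)
  have hrect : ∀ Bw Bx, MeasurableSet Bw → MeasurableSet Bx →
      ∫ ω in W ⁻¹' Bw ∩ X ⁻¹' Bx, q (Z ω, X ω) ∂μ[|{ω | S ω = 1}]
        = ∫ ω in W ⁻¹' Bw ∩ X ⁻¹' Bx, r0 ω / r1 ω ∂μ[|{ω | S ω = 1}] := by
    intro Bw Bx hBw hBx
    have hψ : Measurable (Bw.indicator (1 : 𝓦 → ℝ)) := measurable_const.indicator hBw
    have hχ : Measurable (Bx.indicator (1 : 𝓧 → ℝ)) := measurable_const.indicator hBx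
    rw [setIntegral_preimage_inter_eq_integral_mul hW hX hBw hBx,
      setIntegral_preimage_inter_eq_integral_mul hW hX hBw hBx,
      hZW.integral_mul_mul_eq_of_condExp_ae_eq (hX.prodMk hU) hZ hW hXm₁ hψ
        (abs_indicator_one_le Bw) hχ (abs_indicator_one_le Bx) hq hqi hstar]
    exact hWS.integral_cond_mul_div_eq (hX.prodMk hU) hW hS hm₂ (measurableSet_singleton 1)
      (measurableSet_singleton 0) hp1 hp0 hp1pos hr1 hr0 hr1pos hψ (abs_indicator_one_le Bw)
      (hψ.comp hWm₂) (hχ.comp hXm₁).stronglyMeasurable (hχ.comp hXm₂).stronglyMeasurable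
      (ae_of_all _ fun ω => abs_indicator_one_le Bx (X ω))
  calc _ =ᵐ[μ[|{ω | S ω = 1}]] condExp (MeasurableSpace.comap (fun ω => (W ω, X ω)) inferInstance)
        (μ[|{ω | S ω = 1}]) (fun ω => r0 ω / r1 ω) :=
        condExp_prodMk_ae_eq_of_setIntegral_eq hW hX hqi hri hrect
    _ =ᵐ[μ[|{ω | S ω = 1}]] fun ω => r0 ω / r1 ω :=
        condExp_of_aestronglyMeasurable' hm₂ ((stronglyMeasurable_condExp.measurable.div
          stronglyMeasurable_condExp.measurable).aestronglyMeasurable.congr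
            (cond_absolutelyContinuous.ae_eq (hr0.div hr1)).symm) hri

/-- Second part of Lemma 1: under `Z ⟂ W | (X,U,S=1)` and `W ⟂ S | (X,U)`,
any full-data trial bridge function `q*` (with
`E[q*(Z,X) | X,U,S=1] = P(S=0|X,U)/P(S=1|X,U)`) also satisfies
`E[q*(Z,X) | W,X,S=1] = P(S=0|W,X)/P(S=1|W,X)`; i.e. `Q* ⊆ Q`. -/
theorem stmt3 {Ω 𝓧 𝓤 𝓦 𝓩 : Type*} [MeasurableSpace Ω] [MeasurableSpace 𝓧]
    [MeasurableSpace 𝓤] [MeasurableSpace 𝓦] [MeasurableSpace 𝓩]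
    (μ : Measure Ω) [IsProbabilityMeasure μ]
    (X : Ω → 𝓧) (U : Ω → 𝓤) (W : Ω → 𝓦) (Z : Ω → 𝓩)
    (hX : Measurable X) (hU : Measurable U) (hW : Measurable W) (hZ : Measurable Z)
    (S : Ω → ℝ) (hS : Measurable S) (hSbin : ∀ ω, S ω = 0 ∨ S ω = 1)
    -- Assumption 2(i): `Z ⟂ W | (X, U, S=1)`
    (hZW : CondIndepFunAE (fun ω => (X ω, U ω)) Z W (μ[|{ω | S ω = 1}]))
    -- Assumption 2(iii): `W ⟂ S | (X, U)`
    (hWS : CondIndepFunAE (fun ω => (X ω, U ω)) W S μ)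
    -- versions of `P(S=s | X, U)` with positivity
    (p0 p1 : Ω → ℝ)
    (hp0 : p0 =ᵐ[μ] condExp (MeasurableSpace.comap (fun ω => (X ω, U ω)) inferInstance) μ
      (Set.indicator {ω | S ω = 0} (fun _ => (1 : ℝ))))
    (hp1 : p1 =ᵐ[μ] condExp (MeasurableSpace.comap (fun ω => (X ω, U ω)) inferInstance) μ
      (Set.indicator {ω | S ω = 1} (fun _ => (1 : ℝ))))
    (hp1pos : ∀ᵐ ω ∂μ, 0 < p1 ω)
    -- versions of `P(S=s | W, X)` with positivity
    (r0 r1 : Ω → ℝ)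
    (hr0 : r0 =ᵐ[μ] condExp (MeasurableSpace.comap (fun ω => (W ω, X ω)) inferInstance) μ
      (Set.indicator {ω | S ω = 0} (fun _ => (1 : ℝ))))
    (hr1 : r1 =ᵐ[μ] condExp (MeasurableSpace.comap (fun ω => (W ω, X ω)) inferInstance) μ
      (Set.indicator {ω | S ω = 1} (fun _ => (1 : ℝ))))
    (hr1pos : ∀ᵐ ω ∂μ, 0 < r1 ω)
    -- `q*` is a square-integrable full-data trial bridge function
    (q : 𝓩 × 𝓧 → ℝ) (hq : Measurable q)
    (hq2 : MemLp (fun ω => q (Z ω, X ω)) 2 (μ[|{ω | S ω = 1}]))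
    (hstar : condExp (MeasurableSpace.comap (fun ω => (X ω, U ω)) inferInstance)
        (μ[|{ω | S ω = 1}]) (fun ω => q (Z ω, X ω))
        =ᵐ[μ[|{ω | S ω = 1}]] fun ω => p0 ω / p1 ω) :
    condExp (MeasurableSpace.comap (fun ω => (W ω, X ω)) inferInstance)
        (μ[|{ω | S ω = 1}]) (fun ω => q (Z ω, X ω))
        =ᵐ[μ[|{ω | S ω = 1}]] fun ω => r0 ω / r1 ω :=
  stmt3_general μ X U W Z hX hU hW hZ S hS hZW hWS p0 p1 hp0 hp1 hp1pos r0 r1 hr0 hr1 hr1pos q hq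
    hq2 hstar
end
end

section
/- Let S be binary with conditional densities, and suppose W ⟂ S | (X,U) with P(S=1|X,U)>0 and P(S=1|W,X)>0. Then ∫ [P(S=0 | X, u)/P(S=1 | X, u)] · p(u | W, X, S=1) du = P(S=0 | W, X)/P(S=1 | W, X) almost surely. -/
open MeasureTheory

theorem integral_odds_mul_div {α : Type*} [MeasurableSpace α] {μ : Measure α} {p f : α → ℝ}
    (hp : ∀ᵐ a ∂μ, p a ≠ 0) (c : ℝ) :
    ∫ a, (1 - p a) / p a * (p a * f a / c) ∂μ = (∫ a, (1 - p a) * f a ∂μ) / c := by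
  rw [← integral_div]
  refine integral_congr_ae ?_
  filter_upwards [hp] with a ha
  field_simp

theorem stmt4_general {𝓤 : Type*} [MeasurableSpace 𝓤] (ν : Measure 𝓤)
    (π1 pU pW0 pW1 : 𝓤 → ℝ)
    (hπ1pos : ∀ u, 0 < π1 u)
    -- conditional independence `W ⟂ S | (X, U)`
    (hCI : pW1 =ᵐ[ν] pW0)
    (D1 D0 : ℝ)
    (hD0 : D0 = ∫ u, (1 - π1 u) * pU u * pW0 u ∂ν) :
    ∫ u, ((1 - π1 u) / π1 u) * (π1 u * pU u * pW1 u / D1) ∂ν = D0 / D1 := by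
  calc ∫ u, ((1 - π1 u) / π1 u) * (π1 u * pU u * pW1 u / D1) ∂ν
      = (∫ u, (1 - π1 u) * (pU u * pW1 u) ∂ν) / D1 := by
        simp_rw [mul_assoc (π1 _)]
        exact integral_odds_mul_div (.of_forall fun u => (hπ1pos u).ne') D1
    _ = D0 / D1 := by
        rw [hD0]
        congr 1
        refine integral_congr_ae ?_
        filter_upwards [hCI] with u hu
        rw [hu, mul_assoc]

/-- Density-ratio averaging identity in the proof of Lemma 1. Fix values `(w, x)`.
With respect to a dominating measure `ν` on the space of `u`-values, let `pU u` be the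
density of `U` given `X = x`, let `pW1 u` (resp. `pW0 u`) be the conditional density of
`W` at `w` given `(U = u, X = x, S = 1)` (resp. `S = 0`), and let `π1 u = P(S=1|X=x,U=u)`.
The conditional independence `W ⟂ S | (X,U)` states `pW1 = pW0` (ν-a.e.).
Then, with `D1 ∝ P(S=1, W=w | X=x)` and `D0 ∝ P(S=0, W=w | X=x)`, so that the density of
`U` given `(W=w, X=x, S=1)` is `u ↦ π1 u * pU u * pW1 u / D1` and
`P(S=0|W=w,X=x)/P(S=1|W=w,X=x) = D0/D1`, we have
`∫ [P(S=0|X,u)/P(S=1|X,u)] p(u|W,X,S=1) dν(u) = P(S=0|W,X)/P(S=1|W,X)`. -/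
theorem stmt4 {𝓤 : Type*} [MeasurableSpace 𝓤] (ν : Measure 𝓤)
    (π1 pU pW0 pW1 : 𝓤 → ℝ)
    (hπ1m : Measurable π1) (hpUm : Measurable pU)
    (hpW0m : Measurable pW0) (hpW1m : Measurable pW1)
    (hπ1pos : ∀ u, 0 < π1 u) (hπ1le : ∀ u, π1 u ≤ 1)
    (hpUnn : ∀ u, 0 ≤ pU u) (hpW0nn : ∀ u, 0 ≤ pW0 u) (hpW1nn : ∀ u, 0 ≤ pW1 u)
    -- conditional independence `W ⟂ S | (X, U)`
    (hCI : pW1 =ᵐ[ν] pW0)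
    (hint1 : Integrable (fun u => π1 u * pU u * pW1 u) ν)
    (hint0 : Integrable (fun u => (1 - π1 u) * pU u * pW0 u) ν)
    (D1 D0 : ℝ)
    (hD1 : D1 = ∫ u, π1 u * pU u * pW1 u ∂ν) (hD1pos : 0 < D1)
    (hD0 : D0 = ∫ u, (1 - π1 u) * pU u * pW0 u ∂ν) :
    ∫ u, ((1 - π1 u) / π1 u) * (π1 u * pU u * pW1 u / D1) ∂ν = D0 / D1 :=
  stmt4_general ν π1 pU pW0 pW1 hπ1pos hCI D1 D0 hD0
end

section
/- Consider the structural model in which, given (X,U,S=1): A ~ Bernoulli(b_a) independent of (X,U); W | (X,U) ~ Normal(β_w + B_{wu}U + B_{wx}X, Σ_w); and E[Y | W, A, X, U, S=1] = b_y + b_{ya}A + β_{yu}ᵀU + β_{y(au)}ᵀ(AU) + β_{yx}ᵀX + β_{yw}ᵀW + β_{y(aw)}ᵀ(AW). If B_{wu} is an invertible square matrix, then the linear function h(W,X) = η₀ + η_wᵀW + η_xᵀX with η₀ = b_{ya} − β_wᵀ B_{wu}^{−T} β_{y(au)}, η_x = −B_{wx}ᵀ B_{wu}^{−T} β_{y(au)},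 η_w = B_{wu}^{−T} β_{y(au)} + β_{y(aw)} satisfies E[h(W,X) | X, U, S=1] = E[Y | A=1, X, U, S=1] − E[Y | A=0, X, U, S=1] for all (X,U). -/
/-
In the model, `E[Y | A, X, U]` is computed by the tower property through `σ(W, A, X, U)`: the
outcome regression is linear in `W`, with coefficients `β_yw + A β_yaw` that are
`σ(A, X, U)`-measurable, so `W` may be replaced by its conditional mean
`β_w + B_wu U + B_wx X`. Because `A` is independent of `(X, U)`, conditioning on `{A = a}` leaves
the law of `μ` on `σ(X, U)` unchanged, so `E[Y | A = a, X, U]` is that expression at `A = a`.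
On the bridge side `E[h(W, X) | X, U] = η₀ + η_wᵀ E[W | X, U] + η_xᵀ X`, and the coefficients
match those of the CATE `b_ya + β_yauᵀ U + β_yawᵀ E[W | X, U]` because
`B_wuᵀ (η_w - β_yaw) = β_yau`, while `η_x` and `η₀` cancel the `X`- and constant terms that this
`η_w` produces.
-/

open MeasureTheory ProbabilityTheory Matrix Filter Set

section MatchingCoefficients

variable {R n k : Type*} [CommRing R] [Fintype n] [DecidableEq n] [Fintype k]

theorem bridge_coefficients_dotProduct {B : Matrix n n R} (hB : IsUnit B.det) (C : Matrix n k R)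
    (b : R) (β β_u β_w u : n → R) (x : k → R) {w : n → R} (hw : w = β + B *ᵥ u + C *ᵥ x) :
    (b - β ⬝ᵥ Bᵀ⁻¹ *ᵥ β_u) + (Bᵀ⁻¹ *ᵥ β_u + β_w) ⬝ᵥ w + -(Cᵀ *ᵥ (Bᵀ⁻¹ *ᵥ β_u)) ⬝ᵥ x =
      b + β_u ⬝ᵥ u + β_w ⬝ᵥ w := by
  set v := Bᵀ⁻¹ *ᵥ β_u
  have hv : Bᵀ *ᵥ v = β_u := by
    rw [mulVec_mulVec, mul_nonsing_inv _ (by rwa [det_transpose]), one_mulVec]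
  have hvB : v ⬝ᵥ B *ᵥ u = β_u ⬝ᵥ u := by rw [dotProduct_mulVec, ← mulVec_transpose, hv]
  have hvC : v ⬝ᵥ C *ᵥ x = Cᵀ *ᵥ v ⬝ᵥ x := by rw [dotProduct_mulVec, ← mulVec_transpose]
  simp only [hw, add_dotProduct, dotProduct_add, neg_dotProduct, hvB, hvC, dotProduct_comm v β]
  ring

end MatchingCoefficients

section TrimEq

variable {Ω E : Type*} [NormedAddCommGroup E] {m m₀ : MeasurableSpace Ω} {μ ν : Measure Ω}

theorem integrable_of_trim_eq (hm : m ≤ m₀) (hνμ : ν.trim hm = μ.trim hm) {g : Ω → E}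
    (hg : StronglyMeasurable[m] g) (hgν : Integrable g ν) : Integrable g μ := by
  have hg_trim := hgν.trim hm hg
  rw [hνμ] at hg_trim
  exact integrable_of_integrable_trim hm hg_trim

theorem ae_eq_of_trim_eq (hm : m ≤ m₀) (hνμ : ν.trim hm = μ.trim hm) {f g : Ω → E}
    (hf : StronglyMeasurable[m] f) (hg : StronglyMeasurable[m] g) (hfg : f =ᵐ[ν] g) :
    f =ᵐ[μ] g := by
  rwa [← hf.ae_eq_trim_iff hm hg, ← hνμ, hf.ae_eq_trim_iff hm hg]

end TrimEq

section CondIndepEvent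

variable {Ω : Type*} {m m₁ m₀ : MeasurableSpace Ω} {μ : Measure Ω} {T : Set Ω}

theorem cond_trim_eq_trim [IsFiniteMeasure μ] (hm : m ≤ m₀) (hT : MeasurableSet T) (hT0 : μ T ≠ 0)
    (hind : ∀ s, MeasurableSet[m] s → μ (T ∩ s) = μ T * μ s) :
    μ[|T].trim hm = μ.trim hm := by
  refine @Measure.ext _ m _ _ fun s hs => ?_
  rw [trim_measurableSet_eq hm hs, trim_measurableSet_eq hm hs, cond_apply hT, hind s hs,
    ← mul_assoc, ENNReal.inv_mul_cancel hT0 (measure_ne_top μ T), one_mul]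

theorem setIntegral_cond {s : Set Ω} (hs : MeasurableSet s) (f : Ω → ℝ) :
    ∫ x in s, f x ∂μ[|T] = (μ T).toReal⁻¹ * ∫ x in s ∩ T, f x ∂μ := by
  rw [ProbabilityTheory.cond, Measure.restrict_smul, integral_smul_measure,
    Measure.restrict_restrict hs, ENNReal.toReal_inv, smul_eq_mul]

theorem condExp_cond_ae_eq_of_eqOn [IsFiniteMeasure μ] (hm : m ≤ m₁) (hm₁ : m₁ ≤ m₀) (hT : MeasurableSet[m₁] T)
    (hT0 : μ T ≠ 0) (hind : ∀ s, MeasurableSet[m] s → μ (T ∩ s) = μ T * μ s)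
    {Y G g : Ω → ℝ} (hY : Integrable Y μ) (hG : μ[Y | m₁] =ᵐ[μ] G)
    (hg : StronglyMeasurable[m] g) (hGg : EqOn G g T) :
    Integrable g μ ∧ μ[|T][Y | m] =ᵐ[μ] g := by
  have hm₀ : m ≤ m₀ := hm.trans hm₁
  have hT₀ : MeasurableSet[m₀] T := hm₁ T hT
  have htrim := cond_trim_eq_trim hm₀ hT₀ hT0 hind
  have hμT : (μ T)⁻¹ ≠ ⊤ := ENNReal.inv_ne_top.2 hT0
  have hgν : Integrable g μ[|T] :=
    ((integrable_condExp.congr hG).integrableOn.congr_fun hGg hT₀).smul_measure hμT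
  have hsetIntegral (s : Set Ω) (hs : MeasurableSet[m] s) :
      ∫ x in s ∩ T, g x ∂μ = ∫ x in s ∩ T, Y x ∂μ := by
    have hsT : MeasurableSet[m₁] (s ∩ T) := (hm s hs).inter hT
    rw [← setIntegral_condExp hm₁ hY hsT,
      setIntegral_congr_ae (hm₁ _ hsT) (hG.mono fun _ h _ => h),
      setIntegral_congr_fun (hm₁ _ hsT) (hGg.mono inter_subset_right)]
  have hcond : g =ᵐ[μ[|T]] μ[|T][Y | m] :=
    ae_eq_condExp_of_forall_setIntegral_eq hm₀ (hY.integrableOn.smul_measure hμT)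
      (fun _ _ _ => hgν.integrableOn)
      (fun s hs _ => by
        rw [setIntegral_cond (hm₀ s hs), setIntegral_cond (hm₀ s hs), hsetIntegral s hs])
      hg.aestronglyMeasurable
  exact ⟨integrable_of_trim_eq hm₀ htrim hg hgν,
    (ae_eq_of_trim_eq hm₀ htrim hg stronglyMeasurable_condExp hcond).symm⟩

end CondIndepEvent

section DotProduct

variable {Ω ι : Type*} [Fintype ι] {m m₁ m₀ : MeasurableSpace Ω} {μ : Measure Ω}
  {V W M : Ω → ι → ℝ}

theorem integrable_dotProduct (hVW : ∀ i, Integrable (fun ω => V ω i * W ω i) μ) :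
    Integrable (fun ω => V ω ⬝ᵥ W ω) μ := by
  simpa only [dotProduct] using integrable_finsetSum _ fun i _ => hVW i

theorem condExp_dotProduct_ae_eq (hV : ∀ i, StronglyMeasurable[m] fun ω => V ω i)
    (hVW : ∀ i, Integrable (fun ω => V ω i * W ω i) μ) (hW : ∀ i, Integrable (fun ω => W ω i) μ)
    (hM : ∀ i, μ[fun ω => W ω i | m] =ᵐ[μ] fun ω => M ω i) :
    μ[fun ω => V ω ⬝ᵥ W ω | m] =ᵐ[μ] fun ω => V ω ⬝ᵥ M ω := by
  have hterm (i : ι) : μ[fun ω => V ω i * W ω i | m] =ᵐ[μ] fun ω => V ω i * M ω i :=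
    (condExp_mul_of_stronglyMeasurable_left (hV i) (hVW i) (hW i)).trans
      ((hM i).mono fun ω h => by simp [h])
  have hsum : (fun ω => V ω ⬝ᵥ W ω) = ∑ i, fun ω => V ω i * W ω i := by
    ext ω; simp [dotProduct]
  rw [hsum]
  filter_upwards [condExp_finsetSum (s := Finset.univ) (fun i _ => hVW i) m, ae_all_iff.2 hterm]
    with ω hω hω'
  simp only [hω, Finset.sum_apply, hω', dotProduct]

theorem condExp_add_dotProduct_ae_eq (hm : m ≤ m₀) [SigmaFinite (μ.trim hm)] {K : Ω → ℝ}
    (hK : StronglyMeasurable[m] K) (hKi : Integrable K μ)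
    (hV : ∀ i, StronglyMeasurable[m] fun ω => V ω i)
    (hVW : ∀ i, Integrable (fun ω => V ω i * W ω i) μ) (hW : ∀ i, Integrable (fun ω => W ω i) μ)
    (hM : ∀ i, μ[fun ω => W ω i | m] =ᵐ[μ] fun ω => M ω i) :
    μ[fun ω => K ω + V ω ⬝ᵥ W ω | m] =ᵐ[μ] fun ω => K ω + V ω ⬝ᵥ M ω :=
  (condExp_add hKi (integrable_dotProduct hVW) m).trans <|
    (condExp_of_stronglyMeasurable hm hK hKi).eventuallyEq.add
      (condExp_dotProduct_ae_eq hV hVW hW hM)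

theorem condExp_ae_eq_of_eq_add_dotProduct_sub (hm : m ≤ m₀) [SigmaFinite (μ.trim hm)]
    {h c : Ω → ℝ} (η : ι → ℝ) (hc : StronglyMeasurable[m] c) (hci : Integrable c μ)
    (hW : ∀ i, Integrable (fun ω => W ω i) μ)
    (hM : ∀ i, μ[fun ω => W ω i | m] =ᵐ[μ] fun ω => M ω i) (hMm : Measurable[m] M)
    (hh : ∀ ω, h ω = c ω + η ⬝ᵥ (W ω - M ω)) :
    μ[h | m] =ᵐ[μ] c := by
  have hMi (i : ι) : Integrable (fun ω => M ω i) μ := integrable_condExp.congr (hM i)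
  have hsplit : h = fun ω => (c ω - η ⬝ᵥ M ω) + η ⬝ᵥ W ω :=
    funext fun ω => by rw [hh, dotProduct_sub]; ring
  rw [hsplit]
  exact (condExp_add_dotProduct_ae_eq (K := fun ω => c ω - η ⬝ᵥ M ω) (V := fun _ => η) (M := M) hm
    (hc.sub (Measurable.stronglyMeasurable (by fun_prop)))
    (hci.sub (integrable_dotProduct fun i => (hMi i).const_mul _))
    (fun _ => stronglyMeasurable_const) (fun i => (hW i).const_mul _) hW hM).trans
    (ae_of_all _ fun ω => sub_add_cancel _ _)

theorem condExp_ae_eq_of_le_of_condExp_ae_eq {E : Type*} [NormedAddCommGroup E]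
    [NormedSpace ℝ E] [CompleteSpace E] [IsFiniteMeasure μ] (hm : m ≤ m₁) (hm₁ : m₁ ≤ m₀)
    {f g : Ω → E} (hfg : μ[f | m₁] =ᵐ[μ] g) (hg : StronglyMeasurable[m] g) :
    μ[f | m] =ᵐ[μ] g :=
  (condExp_condExp_of_le hm hm₁).symm.trans <| (condExp_congr_ae hfg).trans
    (condExp_of_stronglyMeasurable (hm.trans hm₁) hg (integrable_condExp.congr hfg)).eventuallyEq

theorem condExp_ae_eq_add_dotProduct_of_le [IsFiniteMeasure μ] (hm : m ≤ m₁) (hm₁ : m₁ ≤ m₀)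
    {Y K : Ω → ℝ}
    (hY : μ[Y | m₁] =ᵐ[μ] fun ω => K ω + V ω ⬝ᵥ W ω) (hK : StronglyMeasurable[m] K)
    (hV : ∀ i, StronglyMeasurable[m] fun ω => V ω i)
    (hVW : ∀ i, Integrable (fun ω => V ω i * W ω i) μ) (hW : ∀ i, Integrable (fun ω => W ω i) μ)
    (hM : ∀ i, μ[fun ω => W ω i | m] =ᵐ[μ] fun ω => M ω i) :
    μ[Y | m] =ᵐ[μ] fun ω => K ω + V ω ⬝ᵥ M ω := by
  have hKi : Integrable K μ :=
    ((integrable_condExp.congr hY).sub (integrable_dotProduct hVW)).congr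
      (ae_of_all _ fun ω => add_sub_cancel_right (K ω) _)
  exact (condExp_condExp_of_le hm hm₁).symm.trans <| (condExp_congr_ae hY).trans <|
    condExp_add_dotProduct_ae_eq (hm.trans hm₁) hK hKi hV hVW hW hM

end DotProduct

section LinearOutcomeModel

variable {Ω ι κ : Type*} [Fintype ι] [Fintype κ] {m₁ m₂ m₀ : MeasurableSpace Ω} {μ : Measure Ω}
  [IsFiniteMeasure μ]

theorem condExp_linearOutcome_ae_eq (hm₁ : m₁ ≤ m₂) (hm₂ : m₂ ≤ m₀)
    {U W M : Ω → ι → ℝ} {X : Ω → κ → ℝ} {A Y : Ω → ℝ}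
    (hU : Measurable[m₁] U) (hX : Measurable[m₁] X) (hA : Measurable[m₁] A)
    (hAbin : ∀ ω, A ω = 0 ∨ A ω = 1)
    (b_y b_ya : ℝ) (β_yu β_yau β_yw β_yaw : ι → ℝ) (β_yx : κ → ℝ)
    (hWint : ∀ i, Integrable (fun ω => W ω i) μ)
    (hWmean : ∀ i, μ[fun ω => W ω i | m₁] =ᵐ[μ] fun ω => M ω i)
    (hYmean : μ[Y | m₂] =ᵐ[μ] fun ω => b_y + b_ya * A ω + β_yu ⬝ᵥ U ω + A ω * (β_yau ⬝ᵥ U ω) +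
      β_yx ⬝ᵥ X ω + β_yw ⬝ᵥ W ω + A ω * (β_yaw ⬝ᵥ W ω)) :
    μ[Y | m₁] =ᵐ[μ] fun ω => b_y + b_ya * A ω + β_yu ⬝ᵥ U ω + A ω * (β_yau ⬝ᵥ U ω) +
      β_yx ⬝ᵥ X ω + β_yw ⬝ᵥ M ω + A ω * (β_yaw ⬝ᵥ M ω) := by
  have hY : μ[Y | m₂] =ᵐ[μ] fun ω => (b_y + b_ya * A ω + β_yu ⬝ᵥ U ω + A ω * (β_yau ⬝ᵥ U ω) +
      β_yx ⬝ᵥ X ω) + (β_yw + A ω • β_yaw) ⬝ᵥ W ω :=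
    hYmean.trans (ae_of_all _ fun ω => by
      simp only [add_dotProduct, smul_dotProduct, smul_eq_mul]; ring)
  have hAW (i : ι) : Integrable (fun ω => (β_yw + A ω • β_yaw) i * W ω i) μ := by
    have hA₀ : Measurable[m₀] A := hA.mono (hm₁.trans hm₂) le_rfl
    refine (hWint i).bdd_mul (c := |β_yw i| + |β_yaw i|) (by fun_prop) (ae_of_all _ fun ω => ?_)
    rcases hAbin ω with h | h <;> simp [h, abs_add_le]
  refine (condExp_ae_eq_add_dotProduct_of_le hm₁ hm₂ hY ?_ ?_ hAW hWint hWmean).trans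
    (ae_of_all _ fun ω => ?_)
  · exact Measurable.stronglyMeasurable (by fun_prop)
  · exact fun i => Measurable.stronglyMeasurable (by fun_prop)
  · simp only [add_dotProduct, smul_dotProduct, smul_eq_mul]; ring

end LinearOutcomeModel

theorem comap_le_comap_prodMk {Ω β γ : Type*} [MeasurableSpace β] [MeasurableSpace γ]
    (f : Ω → β) (g : Ω → γ) :
    MeasurableSpace.comap g inferInstance ≤
      MeasurableSpace.comap (fun ω => (f ω, g ω)) inferInstance :=
  (measurable_snd.comp (comap_measurable fun ω => (f ω, g ω))).comap_le

theorem measure_setOf_eq_zero_ne_zero {Ω : Type*} [MeasurableSpace Ω] {μ : Measure Ω}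
    [IsProbabilityMeasure μ] {A : Ω → ℝ} (hA : Measurable A) (hAbin : ∀ ω, A ω = 0 ∨ A ω = 1)
    (h1 : (μ {ω | A ω = 1}).toReal < 1) : μ {ω | A ω = 0} ≠ 0 := by
  have hcompl : {ω | A ω = 0} = {ω | A ω = 1}ᶜ := by
    ext ω; rcases hAbin ω with h | h <;> simp [h]
  rw [hcompl, Ne, prob_compl_eq_zero_iff (measurableSet_eq_fun hA measurable_const)]
  intro h
  simp [h] at h1

theorem stmt11_general {Ω : Type*} [MeasurableSpace Ω] (μ : Measure Ω) [IsProbabilityMeasure μ]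
    (d dx : ℕ)
    (U W : Ω → (Fin d → ℝ)) (X : Ω → (Fin dx → ℝ)) (A Y : Ω → ℝ)
    (hU : Measurable U) (hW : Measurable W) (hX : Measurable X)
    (hA : Measurable A)
    (hAbin : ∀ ω, A ω = 0 ∨ A ω = 1)
    -- coefficients
    (b_y b_ya b_a : ℝ) (β_yu β_yau β_yw β_yaw β_w : Fin d → ℝ) (β_yx : Fin dx → ℝ)
    (B_wu : Matrix (Fin d) (Fin d) ℝ) (B_wx : Matrix (Fin d) (Fin dx) ℝ)
    (hBinv : IsUnit B_wu.det)
    -- `A ~ Bernoulli(b_a)` independent of `(X, U)`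
    (hba : (μ {ω | A ω = 1}).toReal = b_a) (hba0 : 0 < b_a) (hba1 : b_a < 1)
    (hAindep : ProbabilityTheory.IndepFun A (fun ω => (X ω, U ω)) μ)
    -- conditional mean of `W` given `(A, X, U)` (from `W | (X,U) ~ N(β_w+B_wu U+B_wx X, Σ_w)`)
    (hWmean : ∀ i, condExp
        (MeasurableSpace.comap (fun ω => (A ω, X ω, U ω)) inferInstance) μ
        (fun ω => W ω i) =ᵐ[μ]
      fun ω => β_w i + B_wu.mulVec (U ω) i + B_wx.mulVec (X ω) i)
    -- conditional mean of `Y` given `(W, A, X, U)`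
    (hYmean : condExp
        (MeasurableSpace.comap (fun ω => (W ω, A ω, X ω, U ω)) inferInstance) μ Y =ᵐ[μ]
      fun ω => b_y + b_ya * A ω + β_yu ⬝ᵥ U ω + A ω * (β_yau ⬝ᵥ U ω) + β_yx ⬝ᵥ X ω +
        β_yw ⬝ᵥ W ω + A ω * (β_yaw ⬝ᵥ W ω))
    -- integrability
    (hYint : Integrable Y μ) (hWint : ∀ i, Integrable (fun ω => W ω i) μ)
    -- bridge coefficients
    (η₀ : ℝ) (η_w : Fin d → ℝ) (η_x : Fin dx → ℝ)
    (hη₀ : η₀ = b_ya - β_w ⬝ᵥ (B_wu.transpose)⁻¹.mulVec β_yau)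
    (hη_x : η_x = -(B_wx.transpose.mulVec ((B_wu.transpose)⁻¹.mulVec β_yau)))
    (hη_w : η_w = (B_wu.transpose)⁻¹.mulVec β_yau + β_yaw) :
    condExp (MeasurableSpace.comap (fun ω => (X ω, U ω)) inferInstance) μ
        (fun ω => η₀ + η_w ⬝ᵥ W ω + η_x ⬝ᵥ X ω) =ᵐ[μ]
      fun ω =>
        condExp (MeasurableSpace.comap (fun ω' => (X ω', U ω')) inferInstance)
          (μ[|{ω' | A ω' = 1}]) Y ω -
        condExp (MeasurableSpace.comap (fun ω' => (X ω', U ω')) inferInstance)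
          (μ[|{ω' | A ω' = 0}]) Y ω := by
  have hA₁ : μ {ω | A ω = 1} ≠ 0 := fun h => by simp [h] at hba; linarith
  have hA₀ := measure_setOf_eq_zero_ne_zero hA hAbin (hba ▸ hba1)
  have hm := comap_le_comap_prodMk A fun ω => (X ω, U ω)
  have hm₁ := comap_le_comap_prodMk W fun ω => (A ω, X ω, U ω)
  have hm₂ := (hW.prodMk (hA.prodMk (hX.prodMk hU))).comap_le
  set m := MeasurableSpace.comap (fun ω => (X ω, U ω)) inferInstance
  set m₁ := MeasurableSpace.comap (fun ω => (A ω, X ω, U ω)) inferInstance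
  have hXm : Measurable[m] X := (comap_measurable _).fst
  have hUm : Measurable[m] U := (comap_measurable _).snd
  set mW : Ω → Fin d → ℝ := fun ω => β_w + B_wu *ᵥ U ω + B_wx *ᵥ X ω
  set g : ℝ → Ω → ℝ := fun a ω => b_y + b_ya * a + β_yu ⬝ᵥ U ω + a * (β_yau ⬝ᵥ U ω) +
    β_yx ⬝ᵥ X ω + β_yw ⬝ᵥ mW ω + a * (β_yaw ⬝ᵥ mW ω)
  have hmW : Measurable[m] mW := by fun_prop
  have hg (a : ℝ) : StronglyMeasurable[m] (g a) := Measurable.stronglyMeasurable (by fun_prop)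
  have hY₁ : μ[Y | m₁] =ᵐ[μ] fun ω => g (A ω) ω :=
    condExp_linearOutcome_ae_eq (M := mW) hm₁ hm₂ (hUm.mono hm le_rfl) (hXm.mono hm le_rfl)
      (comap_measurable _).fst hAbin b_y b_ya β_yu β_yau β_yw β_yaw β_yx hWint hWmean hYmean
  have harm (a : ℝ) (ha : μ {ω | A ω = a} ≠ 0) :
      Integrable (g a) μ ∧ μ[|{ω | A ω = a}][Y | m] =ᵐ[μ] g a :=
    condExp_cond_ae_eq_of_eqOn hm (hm₁.trans hm₂)
      ((comap_measurable _).fst (measurableSet_singleton a)) ha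
      (by rintro _ ⟨t, ht, rfl⟩
          exact hAindep.measure_inter_preimage_eq_mul _ _ (measurableSet_singleton a) ht)
      hYint hY₁ (hg a) fun ω (hω : A ω = a) => by simp only [hω]
  obtain ⟨hg₁, hcond₁⟩ := harm 1 hA₁
  obtain ⟨hg₀, hcond₀⟩ := harm 0 hA₀
  have hWm (i : Fin d) : μ[fun ω => W ω i | m] =ᵐ[μ] fun ω => mW ω i :=
    condExp_ae_eq_of_le_of_condExp_ae_eq hm (hm₁.trans hm₂) (hWmean i)
      (Measurable.stronglyMeasurable (by fun_prop))
  have hLHS : μ[fun ω => η₀ + η_w ⬝ᵥ W ω + η_x ⬝ᵥ X ω | m] =ᵐ[μ] g 1 - g 0 :=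
    condExp_ae_eq_of_eq_add_dotProduct_sub (hm.trans (hm₁.trans hm₂)) η_w
      ((hg 1).sub (hg 0)) (hg₁.sub hg₀) hWint hWm hmW fun ω => by
        have := bridge_coefficients_dotProduct hBinv B_wx b_ya β_w β_yau β_yaw (U ω) (X ω) rfl
        subst hη₀ hη_x hη_w
        simp only [g, Pi.sub_apply, dotProduct_sub]
        linear_combination this
  filter_upwards [hLHS, hcond₁, hcond₀] with ω h h₁ h₀
  rw [h, h₁, h₀]
  rfl

/-- Closed-form outcome bridge (Appendix C of the paper). In the structural model where,
given `(X,U)` (and `S=1`, which is the ambient measure here): `A` is Bernoulli(`b_a`)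
independent of `(X,U)`; `E[W | A,X,U] = β_w + B_wu U + B_wx X` (the mean of the Normal
distribution of `W` given `(X,U)`, which does not depend on `A`); and
`E[Y | W,A,X,U] = b_y + b_ya A + β_yuᵀU + β_yauᵀ(AU) + β_yxᵀX + β_ywᵀW + β_yawᵀ(AW)`,
if `B_wu` is invertible then the linear function `h(W,X) = η₀ + η_wᵀW + η_xᵀX` with
`η₀ = b_ya − β_wᵀB_wu⁻ᵀβ_yau`, `η_x = −B_wxᵀB_wu⁻ᵀβ_yau`, `η_w = B_wu⁻ᵀβ_yau + β_yaw`
satisfies `E[h(W,X) | X,U] = E[Y | A=1, X,U] − E[Y | A=0, X,U]`. -/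
theorem stmt11 {Ω : Type*} [MeasurableSpace Ω] (μ : Measure Ω) [IsProbabilityMeasure μ]
    (d dx : ℕ)
    (U W : Ω → (Fin d → ℝ)) (X : Ω → (Fin dx → ℝ)) (A Y : Ω → ℝ)
    (hU : Measurable U) (hW : Measurable W) (hX : Measurable X)
    (hA : Measurable A) (hY : Measurable Y)
    (hAbin : ∀ ω, A ω = 0 ∨ A ω = 1)
    -- coefficients
    (b_y b_ya b_a : ℝ) (β_yu β_yau β_yw β_yaw β_w : Fin d → ℝ) (β_yx : Fin dx → ℝ)
    (B_wu : Matrix (Fin d) (Fin d) ℝ) (B_wx : Matrix (Fin d) (Fin dx) ℝ)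
    (hBinv : IsUnit B_wu.det)
    -- `A ~ Bernoulli(b_a)` independent of `(X, U)`
    (hba : (μ {ω | A ω = 1}).toReal = b_a) (hba0 : 0 < b_a) (hba1 : b_a < 1)
    (hAindep : ProbabilityTheory.IndepFun A (fun ω => (X ω, U ω)) μ)
    -- conditional mean of `W` given `(A, X, U)` (from `W | (X,U) ~ N(β_w+B_wu U+B_wx X, Σ_w)`)
    (hWmean : ∀ i, condExp
        (MeasurableSpace.comap (fun ω => (A ω, X ω, U ω)) inferInstance) μ
        (fun ω => W ω i) =ᵐ[μ]
      fun ω => β_w i + B_wu.mulVec (U ω) i + B_wx.mulVec (X ω) i)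
    -- conditional mean of `Y` given `(W, A, X, U)`
    (hYmean : condExp
        (MeasurableSpace.comap (fun ω => (W ω, A ω, X ω, U ω)) inferInstance) μ Y =ᵐ[μ]
      fun ω => b_y + b_ya * A ω + β_yu ⬝ᵥ U ω + A ω * (β_yau ⬝ᵥ U ω) + β_yx ⬝ᵥ X ω +
        β_yw ⬝ᵥ W ω + A ω * (β_yaw ⬝ᵥ W ω))
    -- integrability
    (hYint : Integrable Y μ) (hWint : ∀ i, Integrable (fun ω => W ω i) μ)
    -- bridge coefficients
    (η₀ : ℝ) (η_w : Fin d → ℝ) (η_x : Fin dx → ℝ)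
    (hη₀ : η₀ = b_ya - β_w ⬝ᵥ (B_wu.transpose)⁻¹.mulVec β_yau)
    (hη_x : η_x = -(B_wx.transpose.mulVec ((B_wu.transpose)⁻¹.mulVec β_yau)))
    (hη_w : η_w = (B_wu.transpose)⁻¹.mulVec β_yau + β_yaw) :
    condExp (MeasurableSpace.comap (fun ω => (X ω, U ω)) inferInstance) μ
        (fun ω => η₀ + η_w ⬝ᵥ W ω + η_x ⬝ᵥ X ω) =ᵐ[μ]
      fun ω =>
        condExp (MeasurableSpace.comap (fun ω' => (X ω', U ω')) inferInstance)
          (μ[|{ω' | A ω' = 1}]) Y ω -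
        condExp (MeasurableSpace.comap (fun ω' => (X ω', U ω')) inferInstance)
          (μ[|{ω' | A ω' = 0}]) Y ω :=
  stmt11_general μ d dx U W X A Y hU hW hX hA hAbin b_y b_ya b_a β_yu β_yau β_yw β_yaw β_w β_yx B_wu
    B_wx hBinv hba hba0 hba1 hAindep hWmean hYmean hYint hWint η₀ η_w η_x hη₀ hη_x hη_w
end

section
/- Suppose S | (X,U) ~ Bernoulli(expit(b_s + β_{sx}ᵀX + β_{su}ᵀU)), and Z | (X,U,S=1) ~ Normal(β_z + B_{zu}U + B_{zx}X, Σ_z) with B_{zu} an invertible square matrix. Then the log-linear function q(Z,X) = exp(ξ₀ + ξ_zᵀZ + ξ_xᵀX) with ξ_z = −B_{zu}^{−T} β_{su}, ξ_x = −β_{sx} + B_{zx}ᵀ B_{zu}^{−T} β_{su}, ξ₀ = −b_s + β_zᵀ B_{zu}^{−T} β_{su} − (1/2) β_{su}ᵀ B_{zu}^{−1} Σ_z B_{zu}^{−T} β_{su} satisfies E[q(Z,X) | X, U, S=1] = P(S=0 | X, U)/P(S=1 | X, U) for all (X,U). -/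
open MeasureTheory ProbabilityTheory Matrix

noncomputable section

def expit (t : ℝ) : ℝ := (1 + Real.exp (-t))⁻¹

/-!
Write `ℓ = b_s + β_sxᵀX + β_suᵀU`. The exponent of `q` splits into the `(X,U)`-measurable part
`ξ₀ + ξ_xᵀX` and `ξ_zᵀZ`; pulling out the former and evaluating the Gaussian moment generating
function at `ξ_z` leaves `exp(-ℓ)`, which is the odds `(1 - expit ℓ) / expit ℓ`. The coefficients
`ξ` are chosen so that `ξ_zᵀB_zu = -β_suᵀ`, which cancels the dependence on `U`.

The pull-out requires `q` to be integrable given `S = 1`. This follows from the identity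
`∫ f g = ∫ f E[g | m]` for `m`-measurable `f ≥ 0` (with the Lebesgue conditional expectation, where
no integrability is needed), used twice: it reduces integrability of `q` to that of `exp(-ℓ)` given
`S = 1`, and `∫_{S=1} exp(-ℓ) dμ = ∫ exp(-ℓ) expit ℓ dμ ≤ 1`.
-/

theorem one_sub_expit_div_expit (t : ℝ) : (1 - expit t) / expit t = Real.exp (-t) := by
  have : 0 < 1 + Real.exp (-t) := by positivity
  rw [expit]
  field_simp
  ring

theorem exp_neg_mul_expit (t : ℝ) : Real.exp (-t) * expit t = 1 - expit t := by
  have : 0 < 1 + Real.exp (-t) := by positivity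
  rw [expit]
  field_simp
  ring

open scoped ENNReal

section ConditionalExpectation

variable {Ω : Type*} {m mΩ : MeasurableSpace Ω} {μ : Measure Ω}

theorem lintegral_mul_condLExp (hm : m ≤ mΩ) [SigmaFinite (μ.trim hm)] {f g : Ω → ℝ≥0∞}
    (hf : Measurable[m] f) (hg : AEMeasurable g μ) :
    ∫⁻ ω, g ω * f ω ∂μ = ∫⁻ ω, condLExp m μ g ω * f ω ∂μ := by
  have hf' : Measurable f := hf.mono hm le_rfl
  have htrim : (μ.withDensity g).trim hm = (μ.withDensity (condLExp m μ g)).trim hm := by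
    refine @Measure.ext _ m _ _ fun s hs => ?_
    rw [trim_measurableSet_eq hm hs, trim_measurableSet_eq hm hs, withDensity_apply _ (hm s hs),
      withDensity_apply _ (hm s hs), setLIntegral_condLExp hm _ _ hs]
  calc ∫⁻ ω, g ω * f ω ∂μ = ∫⁻ ω, f ω ∂(μ.withDensity g) :=
        (lintegral_withDensity_eq_lintegral_mul₀ hg hf'.aemeasurable).symm
    _ = ∫⁻ ω, f ω ∂((μ.withDensity g).trim hm) := (lintegral_trim hm hf).symm
    _ = ∫⁻ ω, f ω ∂((μ.withDensity (condLExp m μ g)).trim hm) := by rw [htrim]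
    _ = ∫⁻ ω, f ω ∂(μ.withDensity (condLExp m μ g)) := lintegral_trim hm hf
    _ = ∫⁻ ω, condLExp m μ g ω * f ω ∂μ :=
        lintegral_withDensity_eq_lintegral_mul₀ (measurable_condLExp' m μ g).aemeasurable
          hf'.aemeasurable

theorem integrable_mul_of_integrable_mul_condExp (hm : m ≤ mΩ) [SigmaFinite (μ.trim hm)]
    {f g : Ω → ℝ} (hf : StronglyMeasurable[m] f) (hg : Integrable g μ) (hg0 : 0 ≤ᵐ[μ] g)
    (hfg : Integrable (f * μ[g|m]) μ) : Integrable (f * g) μ := by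
  refine ⟨(hf.mono hm).aestronglyMeasurable.mul hg.1, ?_⟩
  calc ∫⁻ ω, ‖(f * g) ω‖ₑ ∂μ = ∫⁻ ω, ‖g ω‖ₑ * ‖f ω‖ₑ ∂μ := by
        simp only [Pi.mul_apply, enorm_mul, mul_comm]
    _ = ∫⁻ ω, condLExp m μ (fun ω => ‖g ω‖ₑ) ω * ‖f ω‖ₑ ∂μ :=
        lintegral_mul_condLExp hm (measurable_enorm.comp hf.measurable) hg.1.enorm
    _ = ∫⁻ ω, ‖(f * μ[g|m]) ω‖ₑ ∂μ := by
        refine lintegral_congr_ae ?_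
        filter_upwards [condLExp_enorm m hg hg0] with ω hω
        simp only [hω, Pi.mul_apply, enorm_mul, mul_comm]
    _ < ∞ := hfg.2

theorem condExp_mul_ae_eq_of_condExp_ae_eq (hm : m ≤ mΩ) [SigmaFinite (μ.trim hm)]
    {f g e h : Ω → ℝ} (hf : StronglyMeasurable[m] f) (hg : Integrable g μ) (hg0 : 0 ≤ᵐ[μ] g)
    (he : μ[g|m] =ᵐ[μ] e) (hfe : ∀ ω, f ω * e ω = h ω) (hh : Integrable h μ) :
    μ[f * g|m] =ᵐ[μ] h := by
  have hfg : f * μ[g|m] =ᵐ[μ] h := by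
    filter_upwards [he] with ω hω
    rw [Pi.mul_apply, hω, hfe]
  exact (condExp_mul_of_stronglyMeasurable_left hf
    (integrable_mul_of_integrable_mul_condExp hm hf hg hg0 (hh.congr hfg.symm)) hg).trans hfg

theorem integrable_of_frequently_condExp_ne_zero {g : Ω → ℝ} (hg : ∃ᵐ ω ∂μ, μ[g|m] ω ≠ 0) :
    Integrable g μ := by
  by_contra hint
  simp [condExp_of_not_integrable hint] at hg

theorem integrable_cond_of_integrable_mul_condExp_indicator [IsFiniteMeasure μ] (hm : m ≤ mΩ)
    {s : Set Ω} (hs : MeasurableSet s) {h : Ω → ℝ} (hh : StronglyMeasurable[m] h)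
    (hint : Integrable (h * μ[s.indicator fun _ => (1 : ℝ)|m]) μ) : Integrable h μ[|s] := by
  have hind : Integrable (s.indicator fun _ => (1 : ℝ)) μ := (integrable_const 1).indicator hs
  have hmul : h * s.indicator (fun _ => (1 : ℝ)) = s.indicator h := by
    funext ω
    by_cases hω : ω ∈ s <;> simp [hω]
  have hon : IntegrableOn h s μ := by
    rw [← integrable_indicator_iff hs, ← hmul]
    exact integrable_mul_of_integrable_mul_condExp hm hh hind
      (Filter.Eventually.of_forall fun _ => Set.indicator_nonneg (fun _ _ => zero_le_one) _) hint
  rcases eq_or_ne (μ s) 0 with hs0 | hs0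
  · simp [cond_eq_zero_of_meas_eq_zero hs0]
  · exact hon.smul_measure (ENNReal.inv_ne_top.mpr hs0)

theorem integrable_exp_neg_cond_of_condExp_indicator_eq_expit [IsFiniteMeasure μ]
    (hm : m ≤ mΩ) {s : Set Ω} (hs : MeasurableSet s)
    {ℓ : Ω → ℝ} (hℓ : Measurable[m] ℓ)
    (hprob : μ[s.indicator fun _ => (1 : ℝ)|m] =ᵐ[μ] fun ω => expit (ℓ ω)) :
    Integrable (fun ω => Real.exp (-ℓ ω)) μ[|s] := by
  refine integrable_cond_of_integrable_mul_condExp_indicator hm hs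
    (Real.measurable_exp.comp hℓ.neg).stronglyMeasurable
    (((integrable_const 1).sub (integrable_condExp.congr hprob)).congr ?_)
  filter_upwards [hprob] with ω hω
  rw [Pi.sub_apply, Pi.mul_apply, hω, exp_neg_mul_expit]

end ConditionalExpectation

theorem bridge_exponent_eq {n p : Type*} [Fintype n] [DecidableEq n] [Fintype p]
    {b_s ξ₀ : ℝ} {β_su β_z ξ_z : n → ℝ} {β_sx ξ_x : p → ℝ} {B_zu Sig_z : Matrix n n ℝ}
    {B_zx : Matrix n p ℝ} (hBinv : IsUnit B_zu.det)
    (hξ_z : ξ_z = -(B_zu.transpose)⁻¹.mulVec β_su)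
    (hξ_x : ξ_x = -β_sx + B_zx.transpose.mulVec ((B_zu.transpose)⁻¹.mulVec β_su))
    (hξ₀ : ξ₀ = -b_s + β_z ⬝ᵥ (B_zu.transpose)⁻¹.mulVec β_su -
      (1 / 2) * (β_su ⬝ᵥ (B_zu⁻¹ * Sig_z * (B_zu.transpose)⁻¹).mulVec β_su))
    (x : p → ℝ) (u : n → ℝ) :
    ξ₀ + ξ_x ⬝ᵥ x + (ξ_z ⬝ᵥ (β_z + B_zu *ᵥ u + B_zx *ᵥ x) + 1 / 2 * (ξ_z ⬝ᵥ Sig_z *ᵥ ξ_z)) =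
      -(b_s + β_sx ⬝ᵥ x + β_su ⬝ᵥ u) := by
  set v := (B_zuᵀ)⁻¹ *ᵥ β_su with hv
  have hdet : IsUnit B_zuᵀ.det := by rwa [det_transpose]
  have hu : v ⬝ᵥ (B_zu *ᵥ u) = β_su ⬝ᵥ u := by
    rw [dotProduct_mulVec, ← mulVec_transpose, hv, mulVec_mulVec, mul_nonsing_inv _ hdet,
      one_mulVec]
  have hx : v ⬝ᵥ (B_zx *ᵥ x) = (B_zxᵀ *ᵥ v) ⬝ᵥ x := by
    rw [dotProduct_mulVec, ← mulVec_transpose]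
  have hcov : β_su ⬝ᵥ ((B_zu⁻¹ * Sig_z * (B_zuᵀ)⁻¹) *ᵥ β_su) = v ⬝ᵥ (Sig_z *ᵥ v) := by
    rw [← mulVec_mulVec, ← mulVec_mulVec, dotProduct_mulVec β_su, ← mulVec_transpose,
      transpose_nonsing_inv, ← hv]
  subst hξ_z hξ_x hξ₀
  simp only [neg_dotProduct, dotProduct_neg, dotProduct_add, mulVec_neg, neg_neg, add_dotProduct]
  rw [hu, hx, hcov, dotProduct_comm v β_z]
  ring

theorem stmt12_general {Ω : Type*} [MeasurableSpace Ω] (μ : Measure Ω) [IsProbabilityMeasure μ]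
    (d dx : ℕ)
    (U Z : Ω → (Fin d → ℝ)) (X : Ω → (Fin dx → ℝ)) (S : Ω → ℝ)
    (hU : Measurable U) (hX : Measurable X) (hS : Measurable S)
    -- coefficients
    (b_s : ℝ) (β_su β_z : Fin d → ℝ) (β_sx : Fin dx → ℝ)
    (B_zu : Matrix (Fin d) (Fin d) ℝ) (B_zx : Matrix (Fin d) (Fin dx) ℝ)
    (Sig_z : Matrix (Fin d) (Fin d) ℝ)
    (hBinv : IsUnit B_zu.det)
    -- `S | (X,U) ~ Bernoulli(expit(b_s + β_sxᵀX + β_suᵀU))`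
    (hSmodel : condExp (MeasurableSpace.comap (fun ω => (X ω, U ω)) inferInstance) μ
        (Set.indicator {ω | S ω = 1} (fun _ => (1 : ℝ))) =ᵐ[μ]
      fun ω => expit (b_s + β_sx ⬝ᵥ X ω + β_su ⬝ᵥ U ω))
    -- conditional MGF of the Normal distribution `Z | (X,U,S=1)`
    (hMGF : ∀ t : Fin d → ℝ,
      condExp (MeasurableSpace.comap (fun ω => (X ω, U ω)) inferInstance)
          (μ[|{ω | S ω = 1}]) (fun ω => Real.exp (t ⬝ᵥ Z ω)) =ᵐ[μ[|{ω | S ω = 1}]]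
        fun ω => Real.exp
          (t ⬝ᵥ (fun i => β_z i + B_zu.mulVec (U ω) i + B_zx.mulVec (X ω) i) +
            (1 / 2) * (t ⬝ᵥ Sig_z.mulVec t)))
    -- bridge coefficients
    (ξ₀ : ℝ) (ξ_z : Fin d → ℝ) (ξ_x : Fin dx → ℝ)
    (hξ_z : ξ_z = -(B_zu.transpose)⁻¹.mulVec β_su)
    (hξ_x : ξ_x = -β_sx + B_zx.transpose.mulVec ((B_zu.transpose)⁻¹.mulVec β_su))
    (hξ₀ : ξ₀ = -b_s + β_z ⬝ᵥ (B_zu.transpose)⁻¹.mulVec β_su -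
      (1 / 2) * (β_su ⬝ᵥ (B_zu⁻¹ * Sig_z * (B_zu.transpose)⁻¹).mulVec β_su)) :
    condExp (MeasurableSpace.comap (fun ω => (X ω, U ω)) inferInstance)
        (μ[|{ω | S ω = 1}]) (fun ω => Real.exp (ξ₀ + ξ_z ⬝ᵥ Z ω + ξ_x ⬝ᵥ X ω))
        =ᵐ[μ[|{ω | S ω = 1}]]
      fun ω => (1 - expit (b_s + β_sx ⬝ᵥ X ω + β_su ⬝ᵥ U ω)) /
        expit (b_s + β_sx ⬝ᵥ X ω + β_su ⬝ᵥ U ω) := by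
  have hm : MeasurableSpace.comap (fun ω => (X ω, U ω)) inferInstance ≤ ‹MeasurableSpace Ω› :=
    (hX.prodMk hU).comap_le
  have hpair : Measurable[MeasurableSpace.comap (fun ω => (X ω, U ω)) inferInstance]
      fun ω => (X ω, U ω) := comap_measurable _
  set s := {ω | S ω = 1}
  have hs : MeasurableSet s := hS (measurableSet_singleton 1)
  rcases eq_or_ne (μ s) 0 with hs0 | hs0
  · simp [cond_eq_zero_of_meas_eq_zero hs0, Filter.EventuallyEq]
  have := cond_isProbabilityMeasure hs0
  have hF : StronglyMeasurable[MeasurableSpace.comap (fun ω => (X ω, U ω)) inferInstance]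
      fun ω => Real.exp (ξ₀ + ξ_x ⬝ᵥ X ω) :=
    ((by fun_prop : Measurable fun xu : (Fin dx → ℝ) × (Fin d → ℝ) =>
      Real.exp (ξ₀ + ξ_x ⬝ᵥ xu.1)).comp hpair).stronglyMeasurable
  have hℓ : Measurable[MeasurableSpace.comap (fun ω => (X ω, U ω)) inferInstance]
      fun ω => b_s + β_sx ⬝ᵥ X ω + β_su ⬝ᵥ U ω :=
    (by fun_prop : Measurable fun xu : (Fin dx → ℝ) × (Fin d → ℝ) =>
      b_s + β_sx ⬝ᵥ xu.1 + β_su ⬝ᵥ xu.2).comp hpair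
  have hG : Integrable (fun ω => Real.exp (ξ_z ⬝ᵥ Z ω)) μ[|s] :=
    integrable_of_frequently_condExp_ne_zero
      ((hMGF ξ_z).frequently.mono fun ω hω => by rw [hω]; positivity)
  have hbridge : ∀ ω, Real.exp (ξ₀ + ξ_x ⬝ᵥ X ω) *
      Real.exp (ξ_z ⬝ᵥ (fun i => β_z i + B_zu.mulVec (U ω) i + B_zx.mulVec (X ω) i) +
        (1 / 2) * (ξ_z ⬝ᵥ Sig_z.mulVec ξ_z)) = Real.exp (-(b_s + β_sx ⬝ᵥ X ω + β_su ⬝ᵥ U ω)) :=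
    fun ω => by
      rw [← Real.exp_add]
      exact congrArg Real.exp (bridge_exponent_eq hBinv hξ_z hξ_x hξ₀ (X ω) (U ω))
  have hq : (fun ω => Real.exp (ξ₀ + ξ_z ⬝ᵥ Z ω + ξ_x ⬝ᵥ X ω)) =
      (fun ω => Real.exp (ξ₀ + ξ_x ⬝ᵥ X ω)) * fun ω => Real.exp (ξ_z ⬝ᵥ Z ω) := by
    funext ω
    rw [Pi.mul_apply, ← Real.exp_add, add_right_comm]
  rw [hq]
  filter_upwards [condExp_mul_ae_eq_of_condExp_ae_eq hm hF hG
    (ae_of_all _ fun _ => (Real.exp_pos _).le) (hMGF ξ_z) hbridge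
    (integrable_exp_neg_cond_of_condExp_indicator_eq_expit hm hs hℓ hSmodel)] with ω hω
  rw [hω, one_sub_expit_div_expit]

/-- Closed-form trial (reweighting) bridge (Appendix C of the paper). Suppose
`S | (X,U) ~ Bernoulli(expit(b_s + β_sxᵀX + β_suᵀU))` and `Z | (X,U,S=1)` is Normal with
mean `β_z + B_zu U + B_zx X` and covariance `Sig_z` (encoded through its conditional moment
generating function), with `B_zu` invertible. Then `q(Z,X) = exp(ξ₀ + ξ_zᵀZ + ξ_xᵀX)` with
`ξ_z = −B_zu⁻ᵀβ_su`, `ξ_x = −β_sx + B_zxᵀB_zu⁻ᵀβ_su`,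
`ξ₀ = −b_s + β_zᵀB_zu⁻ᵀβ_su − (1/2)β_suᵀB_zu⁻¹Sig_zB_zu⁻ᵀβ_su`
satisfies `E[q(Z,X) | X,U,S=1] = P(S=0|X,U)/P(S=1|X,U)`. -/
theorem stmt12 {Ω : Type*} [MeasurableSpace Ω] (μ : Measure Ω) [IsProbabilityMeasure μ]
    (d dx : ℕ)
    (U Z : Ω → (Fin d → ℝ)) (X : Ω → (Fin dx → ℝ)) (S : Ω → ℝ)
    (hU : Measurable U) (hZ : Measurable Z) (hX : Measurable X) (hS : Measurable S)
    (hSbin : ∀ ω, S ω = 0 ∨ S ω = 1)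
    -- coefficients
    (b_s : ℝ) (β_su β_z : Fin d → ℝ) (β_sx : Fin dx → ℝ)
    (B_zu : Matrix (Fin d) (Fin d) ℝ) (B_zx : Matrix (Fin d) (Fin dx) ℝ)
    (Sig_z : Matrix (Fin d) (Fin d) ℝ)
    (hBinv : IsUnit B_zu.det)
    -- `S | (X,U) ~ Bernoulli(expit(b_s + β_sxᵀX + β_suᵀU))`
    (hSmodel : condExp (MeasurableSpace.comap (fun ω => (X ω, U ω)) inferInstance) μ
        (Set.indicator {ω | S ω = 1} (fun _ => (1 : ℝ))) =ᵐ[μ]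
      fun ω => expit (b_s + β_sx ⬝ᵥ X ω + β_su ⬝ᵥ U ω))
    -- conditional MGF of the Normal distribution `Z | (X,U,S=1)`
    (hMGF : ∀ t : Fin d → ℝ,
      condExp (MeasurableSpace.comap (fun ω => (X ω, U ω)) inferInstance)
          (μ[|{ω | S ω = 1}]) (fun ω => Real.exp (t ⬝ᵥ Z ω)) =ᵐ[μ[|{ω | S ω = 1}]]
        fun ω => Real.exp
          (t ⬝ᵥ (fun i => β_z i + B_zu.mulVec (U ω) i + B_zx.mulVec (X ω) i) +
            (1 / 2) * (t ⬝ᵥ Sig_z.mulVec t)))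
    -- bridge coefficients
    (ξ₀ : ℝ) (ξ_z : Fin d → ℝ) (ξ_x : Fin dx → ℝ)
    (hξ_z : ξ_z = -(B_zu.transpose)⁻¹.mulVec β_su)
    (hξ_x : ξ_x = -β_sx + B_zx.transpose.mulVec ((B_zu.transpose)⁻¹.mulVec β_su))
    (hξ₀ : ξ₀ = -b_s + β_z ⬝ᵥ (B_zu.transpose)⁻¹.mulVec β_su -
      (1 / 2) * (β_su ⬝ᵥ (B_zu⁻¹ * Sig_z * (B_zu.transpose)⁻¹).mulVec β_su)) :
    condExp (MeasurableSpace.comap (fun ω => (X ω, U ω)) inferInstance)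
        (μ[|{ω | S ω = 1}]) (fun ω => Real.exp (ξ₀ + ξ_z ⬝ᵥ Z ω + ξ_x ⬝ᵥ X ω))
        =ᵐ[μ[|{ω | S ω = 1}]]
      fun ω => (1 - expit (b_s + β_sx ⬝ᵥ X ω + β_su ⬝ᵥ U ω)) /
        expit (b_s + β_sx ⬝ᵥ X ω + β_su ⬝ᵥ U ω) :=
  stmt12_general μ d dx U Z X S hU hX hS b_s β_su β_z β_sx B_zu B_zx Sig_z hBinv hSmodel hMGF ξ₀ ξ_z
    ξ_x hξ_z hξ_x hξ₀
end
end
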